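/- arXiv:1005.1713 — 13 statements merged into one kernel-verified Lean document; each statement's English description precedes it below -/
import Mathlib

section
/- (Iwasawa decomposition; the GL_n case of the first claim of Lemma 2.20, G = P̄TK.) For every n ≥ 1 and every g ∈ GL_n(ℚ_p), there exist an invertible lower triangular n×n matrix b over ℚ_p and a matrix k ∈ GL_n(ℤ_p) such that g = b·k. -/
/-!
Right multiplication by `GL_n(ℤ_p)` performs integral column operations. In the first row of `g`
pick an entry of largest absolute value: subtracting multiples of its column from the others
clears the rest of the row, because every multiplier has absolute value at most one, and a
column swap moves the pivot to position `(0, 0)`. Recursing on the lower-right block yields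
`E ∈ GL_n(ℤ_p)` with `g * E` lower triangular, and `k = E⁻¹`. Only the ultrametric inequality
is used, so the argument works over any ultrametric normed field.
-/

namespace Matrix

section diagCons

variable {α : Type*} {n : ℕ}

/-- The block diagonal matrix `diag(a, A)`. -/
def diagCons [Zero α] (a : α) (A : Matrix (Fin n) (Fin n) α) :
    Matrix (Fin (n + 1)) (Fin (n + 1)) α :=
  of (Fin.cons (Pi.single 0 a) fun i => Fin.cons 0 (A i))

theorem det_diagCons [CommRing α] (a : α) (A : Matrix (Fin n) (Fin n) α) :
    (diagCons a A).det = a * A.det := by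
  rw [det_succ_row_zero, Fin.sum_univ_succ]
  simp [diagCons]
  rfl

theorem mul_diagCons_apply_succ [NonUnitalNonAssocSemiring α] {m : Type*}
    (M : Matrix m (Fin (n + 1)) α) (a : α) (A : Matrix (Fin n) (Fin n) α) (i : m) (j : Fin n) :
    (M * diagCons a A) i j.succ = (M.submatrix id Fin.succ * A) i j := by
  simp [mul_apply, Fin.sum_univ_succ, diagCons]

end diagCons

variable {K : Type*} [NormedField K] {ι : Type*}

theorem norm_one_apply_le_one [DecidableEq ι] (i j : ι) : ‖(1 : Matrix ι ι K) i j‖ ≤ 1 := by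
  rw [one_apply]; split_ifs <;> simp

theorem norm_single_one_apply_le_one [DecidableEq ι] (i j : ι) :
    ‖(Pi.single i 1 : ι → K) j‖ ≤ 1 := by
  rw [Pi.single_apply]; split_ifs <;> simp

theorem norm_mul_apply_le_one [Fintype ι] [IsUltrametricDist K] {A B : Matrix ι ι K}
    (hA : ∀ i j, ‖A i j‖ ≤ 1) (hB : ∀ i j, ‖B i j‖ ≤ 1) (i j : ι) : ‖(A * B) i j‖ ≤ 1 :=
  IsUltrametricDist.norm_sum_le_of_forall_le_of_nonneg zero_le_one fun l _ => by
    rw [norm_mul]; exact mul_le_one₀ (hA i l) (norm_nonneg _) (hB l j)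

variable [Fintype ι] [DecidableEq ι]

/-- Membership in `GL(ι, 𝒪)` for the ring of integers `𝒪 = {x | ‖x‖ ≤ 1}` of `K`. -/
def IsIntegralUnimodular (k : Matrix ι ι K) : Prop :=
  (∀ i j, ‖k i j‖ ≤ 1) ∧ ‖k.det‖ = 1

theorem norm_det_le_one [IsUltrametricDist K] {A : Matrix ι ι K} (hA : ∀ i j, ‖A i j‖ ≤ 1) :
    ‖A.det‖ ≤ 1 := by
  rw [det_apply]
  refine IsUltrametricDist.norm_sum_le_of_forall_le_of_nonneg zero_le_one fun σ _ => ?_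
  rcases Int.units_eq_one_or (Equiv.Perm.sign σ) with h | h <;>
    simp only [h, one_smul, Units.neg_smul, norm_neg, norm_prod] <;>
    exact Finset.prod_le_one (fun _ _ => norm_nonneg _) fun i _ => hA _ _

namespace IsIntegralUnimodular

variable {A B : Matrix ι ι K}

theorem one : IsIntegralUnimodular (1 : Matrix ι ι K) :=
  ⟨norm_one_apply_le_one, by simp⟩

theorem isUnit_det (hA : IsIntegralUnimodular A) : IsUnit A.det :=
  isUnit_iff_ne_zero.2 <| norm_ne_zero_iff.1 <| hA.2 ▸ one_ne_zero

theorem mul [IsUltrametricDist K] (hA : IsIntegralUnimodular A) (hB : IsIntegralUnimodular B) :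
    IsIntegralUnimodular (A * B) :=
  ⟨norm_mul_apply_le_one hA.1 hB.1, by rw [det_mul, norm_mul, hA.2, hB.2, one_mul]⟩

theorem inv [IsUltrametricDist K] (hA : IsIntegralUnimodular A) : IsIntegralUnimodular A⁻¹ := by
  refine ⟨fun i j => ?_, by rw [det_nonsing_inv, Ring.inverse_eq_inv', norm_inv, hA.2, inv_one]⟩
  rw [inv_def, Ring.inverse_eq_inv', smul_apply, smul_eq_mul, norm_mul, norm_inv, hA.2, inv_one,
    one_mul, adjugate_apply]
  refine norm_det_le_one fun k l => ?_
  rw [updateRow_apply]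
  split_ifs
  · exact norm_single_one_apply_le_one i l
  · exact hA.1 k l

theorem permMatrix (σ : Equiv.Perm ι) : IsIntegralUnimodular (σ.permMatrix K) := by
  refine ⟨fun i j => ?_, ?_⟩
  · rw [Equiv.Perm.permMatrix, PEquiv.toMatrix_apply]; split_ifs <;> simp
  · rw [det_permutation]
    rcases Int.units_eq_one_or (Equiv.Perm.sign σ) with h | h <;> simp [h]

theorem one_add_vecMulVec [IsUltrametricDist K] {u w : ι → K} (hu : ∀ i, ‖u i‖ ≤ 1)
    (hw : ∀ j, ‖w j‖ ≤ 1) (hwu : w ⬝ᵥ u = 0) : IsIntegralUnimodular (1 + vecMulVec u w) := by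
  refine ⟨fun i j => ?_, ?_⟩
  · rw [add_apply, vecMulVec_apply]
    refine (IsUltrametricDist.norm_add_le_max _ _).trans (max_le (norm_one_apply_le_one i j) ?_)
    rw [norm_mul]; exact mul_le_one₀ (hu i) (norm_nonneg _) (hw j)
  · rw [vecMulVec_eq Unit, det_one_add_replicateCol_mul_replicateRow, hwu, add_zero, norm_one]

theorem diagCons {n : ℕ} {A : Matrix (Fin n) (Fin n) K} (hA : IsIntegralUnimodular A) :
    IsIntegralUnimodular (diagCons 1 A) := by
  refine ⟨fun i j => ?_, by rw [det_diagCons, one_mul, hA.2]⟩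
  cases i using Fin.cases <;> cases j using Fin.cases <;> simp [Matrix.diagCons, hA.1]

end IsIntegralUnimodular

theorem exists_isIntegralUnimodular_vecMul_eq_single [IsUltrametricDist K] (v : ι → K) (i : ι) :
    ∃ E : Matrix ι ι K, IsIntegralUnimodular E ∧ ∃ c, v ᵥ* E = Pi.single i c := by
  by_cases hv : v = 0
  · exact ⟨1, .one, 0, by simp [hv]⟩
  have : Nonempty ι := ⟨i⟩
  obtain ⟨j₀, hj₀⟩ := Finite.exists_max fun j => ‖v j‖
  have hc : v j₀ ≠ 0 := by
    contrapose! hv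
    ext j
    simpa [hv] using hj₀ j
  set w : ι → K := Pi.single j₀ 1 - (v j₀)⁻¹ • v
  -- the pivot `v j₀` has maximal norm, so the multipliers `v j / v j₀` are integral
  have hw : ∀ j, ‖w j‖ ≤ 1 := fun j => by
    simp only [w]
    rw [Pi.sub_apply, sub_eq_add_neg]
    refine (IsUltrametricDist.norm_add_le_max _ _).trans (max_le ?_ ?_)
    · exact norm_single_one_apply_le_one j₀ j
    · rw [norm_neg, Pi.smul_apply, smul_eq_mul, norm_mul, norm_inv,
        inv_mul_le_one₀ (norm_pos_iff.2 hc)]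
      exact hj₀ j
  have hwu : w ⬝ᵥ Pi.single j₀ 1 = 0 := by simp [w, inv_mul_cancel₀ hc]
  have hclear : v ᵥ* (1 + vecMulVec (Pi.single j₀ 1) w) = Pi.single j₀ (v j₀) := by
    rw [vecMul_add, vecMul_one, vecMul_vecMulVec, dotProduct_single, mul_one, smul_sub, smul_smul,
      mul_inv_cancel₀ hc, one_smul, add_sub_cancel, ← Pi.single_smul, smul_eq_mul, mul_one]
  have hT := IsIntegralUnimodular.one_add_vecMulVec (norm_single_one_apply_le_one j₀) hw hwu
  refine ⟨_, hT.mul (.permMatrix (Equiv.swap i j₀)), v j₀, ?_⟩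
  rw [← vecMul_vecMul, hclear, vecMul_permMatrix]
  ext j
  simp [Pi.single_apply, Equiv.swap_apply_eq_iff]

theorem exists_isIntegralUnimodular_mul_lowerTriangular [IsUltrametricDist K] :
    ∀ {n : ℕ} (g : Matrix (Fin n) (Fin n) K),
      ∃ E : Matrix (Fin n) (Fin n) K, IsIntegralUnimodular E ∧ ∀ i j, i < j → (g * E) i j = 0
  | 0, _ => ⟨1, .one, fun i => i.elim0⟩
  | n + 1, g => by
    obtain ⟨E₁, hE₁, c, hrow⟩ := exists_isIntegralUnimodular_vecMul_eq_single (g 0) 0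
    obtain ⟨E₂, hE₂, hlower⟩ :=
      exists_isIntegralUnimodular_mul_lowerTriangular ((g * E₁).submatrix Fin.succ Fin.succ)
    refine ⟨E₁ * diagCons 1 E₂, hE₁.mul hE₂.diagCons, fun i j hij => ?_⟩
    obtain ⟨j, rfl⟩ := Fin.exists_succ_eq.2 (i.zero_le.trans_lt hij).ne'
    rw [← Matrix.mul_assoc, mul_diagCons_apply_succ]
    cases i using Fin.cases with
    | zero =>
      have hrow' : ∀ l : Fin n, (g * E₁) 0 l.succ = 0 := fun l => by
        rw [mul_apply_eq_vecMul, hrow, Pi.single_eq_of_ne (Fin.succ_ne_zero l)]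
      simp [mul_apply, hrow']
    | succ i => exact hlower i j (Fin.succ_lt_succ_iff.1 hij)

end Matrix

open Matrix

theorem statement0_general (p : ℕ) [Fact p.Prime] (n : ℕ)
    (g : Matrix (Fin n) (Fin n) ℚ_[p]) (hg : IsUnit g.det) :
    ∃ b k : Matrix (Fin n) (Fin n) ℚ_[p],
      IsUnit b.det ∧ (∀ i j : Fin n, i < j → b i j = 0) ∧
      (∀ i j, ‖k i j‖ ≤ 1) ∧ ‖k.det‖ = 1 ∧ g = b * k := by
  obtain ⟨E, hE, hlower⟩ := exists_isIntegralUnimodular_mul_lowerTriangular g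
  refine ⟨g * E, E⁻¹, ?_, hlower, hE.inv.1, hE.inv.2, ?_⟩
  · rw [det_mul]
    exact hg.mul hE.isUnit_det
  · rw [mul_nonsing_inv_cancel_right _ _ hE.isUnit_det]

/-- Iwasawa decomposition for `GL_n(ℚ_p)`, the `GL_n` case of the first
claim of Lemma 2.20: `G = P̄ T K`: every invertible matrix `g` over `ℚ_p` factors as
`g = b * k` with `b` an invertible lower triangular matrix over `ℚ_p` and
`k ∈ GL_n(ℤ_p)` (integral entries, determinant a unit in `ℤ_p`). -/
theorem statement0 (p : ℕ) [Fact p.Prime] (n : ℕ) (hn : 1 ≤ n)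
    (g : Matrix (Fin n) (Fin n) ℚ_[p]) (hg : IsUnit g.det) :
    ∃ b k : Matrix (Fin n) (Fin n) ℚ_[p],
      IsUnit b.det ∧ (∀ i j : Fin n, i < j → b i j = 0) ∧
      (∀ i j, ‖k i j‖ ≤ 1) ∧ ‖k.det‖ = 1 ∧ g = b * k :=
  statement0_general p n g hg
end

section
/- (GL_n case of Proposition 2.15: red(K ∩ K^t) = P_λ(k).) Let λ : {1,…,n} → ℤ and let t = t_λ. Then the image under entrywise reduction mod p of the group {g ∈ GL_n(ℤ_p) : all entries of t·g·t⁻¹ lie in ℤ_p} equals the parabolic subgroup {ḡ ∈ GL_n(𝔽_p) : ḡ_{ij} = 0 whenever λ(i) < λ(j)} of GL_n(𝔽_p). -/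
/-!
Conjugation by `t_λ` multiplies the entry `g i j` by `p ^ (λ i - λ j)`, so `g` lies in
`K ∩ K^t` exactly when `‖g i j‖ ≤ p ^ (λ i - λ j)` for all `i, j`. When `λ i < λ j` this forces
`‖g i j‖ < 1`, i.e. `g i j ≡ 0 mod p`. Conversely, lifting the entries of `ḡ` along a section of
`ℤ_p → 𝔽_p` sending `0` to `0` gives a matrix satisfying these bounds, and its determinant is a
unit because `ℤ_p` is local, so a unit modulo `p` is a unit.
-/

/-- The diagonal matrix `t_λ = diag(p^{λ 0}, …, p^{λ (n-1)})` over `ℚ_p`. -/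
noncomputable def tdiag (p : ℕ) [Fact p.Prime] {n : ℕ} (μ : Fin n → ℤ) :
    Matrix (Fin n) (Fin n) ℚ_[p] :=
  Matrix.diagonal fun i => (p : ℚ_[p]) ^ (μ i)

namespace Matrix

theorem inv_diagonal_of_ne_zero {ι K : Type*} [Fintype ι] [DecidableEq ι] [Field K]
    {d : ι → K} (hd : ∀ i, d i ≠ 0) : (diagonal d)⁻¹ = diagonal d⁻¹ :=
  inv_eq_right_inv <| by
    rw [diagonal_mul_diagonal, ← diagonal_one]
    exact congrArg diagonal (funext fun i => mul_inv_cancel₀ (hd i))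

theorem diagonal_mul_mul_inv_diagonal_apply {ι K : Type*} [Fintype ι] [DecidableEq ι] [Field K]
    {d : ι → K} (hd : ∀ i, d i ≠ 0) (A : Matrix ι ι K) (i j : ι) :
    (diagonal d * A * (diagonal d)⁻¹) i j = d i * A i j / d j := by
  rw [inv_diagonal_of_ne_zero hd, mul_diagonal, diagonal_mul, Pi.inv_apply, div_eq_mul_inv]

end Matrix

theorem Padic.norm_p_zpow_mul_le_one_iff {p : ℕ} [Fact p.Prime] (k : ℤ) (x : ℚ_[p]) :
    ‖(p : ℚ_[p]) ^ k * x‖ ≤ 1 ↔ ‖x‖ ≤ (p : ℝ) ^ k := by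
  have hp : (0 : ℝ) < p := mod_cast (Fact.out : p.Prime).pos
  rw [norm_mul, Padic.norm_p_zpow, zpow_neg, inv_mul_le_iff₀ (zpow_pos hp k), mul_one]

namespace PadicInt

variable {p : ℕ} [Fact p.Prime]

theorem toZMod_eq_zero_iff_norm_lt_one {x : ℤ_[p]} : toZMod x = 0 ↔ ‖x‖ < 1 := by
  rw [← RingHom.mem_ker, ker_toZMod, IsLocalRing.mem_maximalIdeal, mem_nonunits]

theorem isUnit_det_map_toZMod_iff {ι : Type*} [Fintype ι] [DecidableEq ι]
    {A : Matrix ι ι ℤ_[p]} : IsUnit (A.map toZMod).det ↔ IsUnit A.det := by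
  rw [← RingHom.mapMatrix_apply, ← RingHom.map_det, isUnit_map_iff]

theorem map_toZMod_map_natCast_val {ι κ : Type*} (B : Matrix ι κ (ZMod p)) :
    (B.map fun a => (a.val : ℤ_[p])).map toZMod = B := by
  ext i j
  simp only [Matrix.map_apply, map_natCast, ZMod.natCast_zmod_val]

end PadicInt

theorem tdiag_mul_mul_inv_tdiag_apply {p : ℕ} [Fact p.Prime] {n : ℕ} (μ : Fin n → ℤ)
    (A : Matrix (Fin n) (Fin n) ℚ_[p]) (i j : Fin n) :
    (tdiag p μ * A * (tdiag p μ)⁻¹) i j = (p : ℚ_[p]) ^ (μ i - μ j) * A i j := by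
  have hp : (p : ℚ_[p]) ≠ 0 := mod_cast (Fact.out : p.Prime).ne_zero
  rw [tdiag, Matrix.diagonal_mul_mul_inv_diagonal_apply (fun i => zpow_ne_zero _ hp),
    zpow_sub₀ hp]
  ring

theorem norm_tdiag_conj_apply_le_one_iff {p : ℕ} [Fact p.Prime] {n : ℕ} (μ : Fin n → ℤ)
    (A : Matrix (Fin n) (Fin n) ℤ_[p]) (i j : Fin n) :
    ‖(tdiag p μ * A.map (fun x : ℤ_[p] => (x : ℚ_[p])) * (tdiag p μ)⁻¹) i j‖ ≤ 1 ↔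
      ‖A i j‖ ≤ (p : ℝ) ^ (μ i - μ j) := by
  rw [tdiag_mul_mul_inv_tdiag_apply, Padic.norm_p_zpow_mul_le_one_iff, Matrix.map_apply,
    PadicInt.norm_def]

/-- `GL_n` case of Proposition 2.15: `red(K ∩ K^t) = P_λ(k)`: the image,
under entrywise reduction mod `p`, of the set of `g ∈ GL_n(ℤ_p)` such that all entries of
`t g t⁻¹` (with `t = t_λ`) are in `ℤ_p`, equals the parabolic subgroup of `GL_n(𝔽_p)` of
matrices `ḡ` with `ḡ i j = 0` whenever `λ i < λ j`. -/
theorem statement5 (p : ℕ) [Fact p.Prime] (n : ℕ) (lam : Fin n → ℤ) :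
    (fun g : Matrix (Fin n) (Fin n) ℤ_[p] => g.map (fun x => (PadicInt.toZMod x : ZMod p))) ''
        {g : Matrix (Fin n) (Fin n) ℤ_[p] | IsUnit g.det ∧
          ∀ i j, ‖(tdiag p lam * g.map (fun x : ℤ_[p] => (x : ℚ_[p])) * (tdiag p lam)⁻¹) i j‖ ≤ 1} =
      {gbar : Matrix (Fin n) (Fin n) (ZMod p) | IsUnit gbar.det ∧
        ∀ i j : Fin n, lam i < lam j → gbar i j = 0} := by
  have hp : (1 : ℝ) < p := mod_cast (Fact.out : p.Prime).one_lt
  ext gbar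
  simp only [Set.mem_image, Set.mem_ofPred_eq, norm_tdiag_conj_apply_le_one_iff]
  constructor
  · rintro ⟨g, ⟨hdet, hbound⟩, rfl⟩
    refine ⟨PadicInt.isUnit_det_map_toZMod_iff.mpr hdet, fun i j hij => ?_⟩
    exact PadicInt.toZMod_eq_zero_iff_norm_lt_one.mpr
      ((hbound i j).trans_lt (zpow_lt_one_of_neg₀ hp (sub_neg.mpr hij)))
  · rintro ⟨hdet, hzero⟩
    set g := gbar.map fun a => (a.val : ℤ_[p])
    have hg : g.map PadicInt.toZMod = gbar := PadicInt.map_toZMod_map_natCast_val gbar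
    refine ⟨g, ⟨PadicInt.isUnit_det_map_toZMod_iff.mp (hg ▸ hdet), fun i j => ?_⟩, hg⟩
    rcases lt_or_ge (lam i) (lam j) with hij | hij
    · simp only [g, Matrix.map_apply, hzero i j hij, ZMod.val_zero, Nat.cast_zero, norm_zero]
      positivity
    · exact (PadicInt.norm_le_one _).trans (one_le_zpow₀ hp.le (sub_nonneg.mpr hij))
end

section
/- (Double coset identity from the proof of Lemma 2.21, GL_n case: 𝒫h₁𝒫h₂𝒫 = 𝒫h₁h₂𝒫.) Fix a block function b : {1,…,n} → {1,…,r} and let 𝒫 = {g ∈ GL_n(ℤ_p) : g_{ij} ∈ pℤ_p whenever b(i) > b(j)} be the associated parahoric subgroup. Let μ₁, μ₂ : {1,…,n} → ℤ be antidominant and constant on blocks (μ_a(i) = μ_a(i') whenever b(i) = b(i')), and set h₁ = t_{μ₁}, h₂ = t_{μ₂}. Then, as subsets of GL_n(ℚ_p), the set product 𝒫·h₁·𝒫·h₂·𝒫 equals 𝒫·h₁h₂·𝒫. -/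
/-!
Every `g ∈ 𝒫` has an Iwahori factorisation `g = L * U` with `L, U ∈ 𝒫` block lower,
resp. block upper, triangular: Gaussian elimination on the first column works inside `𝒫`,
because the first block of that column contains a unit (otherwise `det g` would lie in `pℤ_p`).
As `μ₁, μ₂` are antidominant and constant on blocks, conjugation by `t_{μ₁}` only shrinks the
entries of `L` and conjugation by `t_{μ₂}⁻¹` only shrinks those of `U`, so
`t_{μ₁} g t_{μ₂} = (t_{μ₁} L t_{μ₁}⁻¹) (t_{μ₁} t_{μ₂}) (t_{μ₂}⁻¹ U t_{μ₂}) ∈ 𝒫 t_{μ₁} t_{μ₂} 𝒫`.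
The reverse inclusion only uses `1 ∈ 𝒫`.
-/

open Pointwise

/-- The parahoric subgroup `𝒫` attached to a block function `b`, as a set of matrices
over `ℚ_p`: elements of `GL_n(ℤ_p)` whose below-block entries lie in `pℤ_p`. -/
def Parahoric (p : ℕ) [Fact p.Prime] {n r : ℕ} (b : Fin n → Fin r) :
    Set (Matrix (Fin n) (Fin n) ℚ_[p]) :=
  {g | (∀ i j, ‖g i j‖ ≤ 1) ∧ ‖g.det‖ = 1 ∧ ∀ i j, b j < b i → ‖g i j‖ ≤ (p : ℝ)⁻¹}

open Matrix OrderDual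

theorem Padic.norm_le_inv_of_norm_lt_one {p : ℕ} [Fact p.Prime] {x : ℚ_[p]} (hx : ‖x‖ < 1) :
    ‖x‖ ≤ (p : ℝ)⁻¹ := by
  simpa using (Padic.norm_le_pow_iff_norm_lt_pow_add_one x (-1)).2 (by simpa using hx)

theorem Padic.norm_det_le_one {p : ℕ} [Fact p.Prime] {ι : Type*} [Fintype ι] [DecidableEq ι]
    {M : Matrix ι ι ℚ_[p]} (hM : ∀ i j, ‖M i j‖ ≤ 1) : ‖M.det‖ ≤ 1 := by
  have : M = PadicInt.Coe.ringHom.mapMatrix (Matrix.of fun i j => (⟨M i j, hM i j⟩ : ℤ_[p])) := by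
    ext; rfl
  rw [this, ← RingHom.map_det]
  exact PadicInt.norm_le_one _

theorem double_coset_mul_eq {α : Type*} [Monoid α] {S : Set α} (hS : S * S = S) (h₁ : 1 ∈ S)
    {x y : α} (h : {x} * S * {y} ⊆ S * {x * y} * S) :
    S * {x} * S * {y} * S = S * {x * y} * S := by
  apply Set.Subset.antisymm
  · calc S * {x} * S * {y} * S = S * ({x} * S * {y}) * S := by simp only [mul_assoc]
      _ ⊆ S * (S * {x * y} * S) * S := by gcongr
      _ = (S * S) * {x * y} * (S * S) := by simp only [mul_assoc]
      _ = S * {x * y} * S := by rw [hS]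
  · calc S * {x * y} * S = S * ({x} * {1} * {y}) * S := by
          rw [Set.singleton_mul_singleton, Set.singleton_mul_singleton, mul_one]
      _ ⊆ S * {x} * S * {y} * S := by
          simp only [mul_assoc]
          gcongr
          exact Set.singleton_subset_iff.2 h₁

/-- The block matrix `!![a, v; 0, M]`. -/
def Matrix.upperCons {R : Type*} [Zero R] {m : ℕ} (a : R) (v : Fin m → R)
    (M : Matrix (Fin m) (Fin m) R) : Matrix (Fin (m + 1)) (Fin (m + 1)) R :=
  Matrix.of (Fin.cons (Fin.cons a v) fun i => Fin.cons 0 (M i))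

namespace Matrix

section UpperCons

variable {R : Type*} {m : ℕ} (a : R) (v : Fin m → R) (M : Matrix (Fin m) (Fin m) R)

section Zero

variable [Zero R]

@[simp] theorem upperCons_zero_zero : upperCons a v M 0 0 = a := rfl

@[simp] theorem upperCons_zero_succ (j : Fin m) : upperCons a v M 0 j.succ = v j := rfl

@[simp] theorem upperCons_succ_zero (i : Fin m) : upperCons a v M i.succ 0 = 0 := rfl

@[simp] theorem upperCons_succ_succ (i j : Fin m) : upperCons a v M i.succ j.succ = M i j := rfl

@[simp] theorem upperCons_submatrix_succ_succ :
    (upperCons a v M).submatrix Fin.succ Fin.succ = M :=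
  rfl

theorem blockTriangular_upperCons {α : Type*} [Preorder α] {c : Fin (m + 1) → α}
    (hv : ∀ j, c j.succ < c 0 → v j = 0) (hM : M.BlockTriangular (c ∘ Fin.succ)) :
    (upperCons a v M).BlockTriangular c := by
  intro i j hij
  cases i using Fin.cases <;> cases j using Fin.cases
  · exact absurd hij (lt_irrefl _)
  · exact hv _ hij
  · rfl
  · exact hM hij

end Zero

variable [CommRing R]

theorem det_upperCons : (upperCons a v M).det = a * M.det := by
  simp [det_succ_column_zero, Fin.sum_univ_succ]

theorem upperCons_mul_upperCons (a' : R) (v' : Fin m → R) (M' : Matrix (Fin m) (Fin m) R) :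
    upperCons a v M * upperCons a' v' M' = upperCons (a * a') (a • v' + v ᵥ* M') (M * M') := by
  ext i j
  cases i using Fin.cases <;> cases j using Fin.cases <;>
    simp [mul_apply, Fin.sum_univ_succ, vecMul, dotProduct]

theorem eq_upperCons_of_col_zero {g : Matrix (Fin (m + 1)) (Fin (m + 1)) R}
    (hg : ∀ i : Fin m, g i.succ 0 = 0) :
    g = upperCons (g 0 0) (fun j => g 0 j.succ) (g.submatrix Fin.succ Fin.succ) := by
  ext i j
  cases i using Fin.cases <;> cases j using Fin.cases <;> simp [hg]

end UpperCons

variable {R : Type*} [CommRing R] {ι : Type*} [Fintype ι] [DecidableEq ι]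

theorem one_add_vecMulVec_mul_one_add_vecMulVec_neg {u v : ι → R} (h : v ⬝ᵥ u = 0) :
    (1 + vecMulVec u v) * (1 + vecMulVec (-u) v) = 1 := by
  rw [mul_add, add_mul, add_mul, vecMulVec_mul_vecMulVec, dotProduct_neg, h, neg_zero,
    zero_smul, neg_vecMulVec]
  simp

theorem det_one_add_vecMulVec {u v : ι → R} (h : v ⬝ᵥ u = 0) : (1 + vecMulVec u v).det = 1 := by
  rw [vecMulVec_eq Unit, det_one_add_replicateCol_mul_replicateRow, h, add_zero]

end Matrix

section Diagonal

variable {p : ℕ} [Fact p.Prime] {n : ℕ}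

theorem tdiag_mul_tdiag (μ ν : Fin n → ℤ) : tdiag p μ * tdiag p ν = tdiag p (μ + ν) := by
  have hp : (p : ℚ_[p]) ≠ 0 := by exact_mod_cast (Fact.out : p.Prime).ne_zero
  simp [tdiag, zpow_add₀ hp]

theorem tdiag_zero : tdiag p (0 : Fin n → ℤ) = 1 := by simp [tdiag]

theorem norm_tdiag_conj_apply_le {μ : Fin n → ℤ} {M : Matrix (Fin n) (Fin n) ℚ_[p]} {i j : Fin n}
    (h : M i j ≠ 0 → μ j ≤ μ i) : ‖(tdiag p μ * M * tdiag p (-μ)) i j‖ ≤ ‖M i j‖ := by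
  by_cases hM : M i j = 0
  · simp [tdiag, hM]
  have hp : (1 : ℝ) ≤ p := by exact_mod_cast (Fact.out : p.Prime).one_le
  have hscale : (p : ℝ) ^ (-μ i) * (p : ℝ) ^ μ j ≤ 1 := by
    rw [← zpow_add₀ (by positivity)]
    exact zpow_le_one_of_nonpos₀ hp (by linarith [h hM])
  rw [tdiag, tdiag, mul_diagonal, diagonal_mul, norm_mul, norm_mul, Pi.neg_apply,
    Padic.norm_p_zpow, Padic.norm_p_zpow, neg_neg]
  nlinarith [norm_nonneg (M i j)]

end Diagonal

namespace Parahoric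

variable {p : ℕ} [Fact p.Prime] {r : ℕ}

def lower (p : ℕ) [Fact p.Prime] {n r : ℕ} (b : Fin n → Fin r) :
    Set (Matrix (Fin n) (Fin n) ℚ_[p]) :=
  {g | g ∈ Parahoric p b ∧ g.BlockTriangular (toDual ∘ b)}

def upper (p : ℕ) [Fact p.Prime] {n r : ℕ} (b : Fin n → Fin r) :
    Set (Matrix (Fin n) (Fin n) ℚ_[p]) :=
  {g | g ∈ Parahoric p b ∧ g.BlockTriangular b}

section General

variable {n : ℕ} {b : Fin n → Fin r}

theorem one_mem : (1 : Matrix (Fin n) (Fin n) ℚ_[p]) ∈ Parahoric p b := by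
  refine ⟨fun i j => ?_, by simp, fun i j hij => ?_⟩
  · rw [one_apply]; split_ifs <;> simp
  · rw [one_apply_ne (by rintro rfl; exact lt_irrefl _ hij), norm_zero]
    positivity

theorem mul_mem {g h : Matrix (Fin n) (Fin n) ℚ_[p]} (hg : g ∈ Parahoric p b)
    (hh : h ∈ Parahoric p b) : g * h ∈ Parahoric p b := by
  refine ⟨fun i j => ?_, by rw [det_mul, norm_mul, hg.2.1, hh.2.1, one_mul], fun i j hij => ?_⟩
  · rw [mul_apply]
    refine IsUltrametricDist.norm_sum_le_of_forall_le_of_nonneg zero_le_one fun k _ => ?_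
    rw [norm_mul]
    exact mul_le_one₀ (hg.1 i k) (norm_nonneg _) (hh.1 k j)
  · rw [mul_apply]
    refine IsUltrametricDist.norm_sum_le_of_forall_le_of_nonneg (by positivity) fun k _ => ?_
    rw [norm_mul]
    rcases lt_or_ge (b k) (b i) with hk | hk
    · simpa using mul_le_mul (hg.2.2 i k hk) (hh.1 k j) (norm_nonneg _) (by positivity)
    · simpa using mul_le_mul (hg.1 i k) (hh.2.2 k j (hij.trans_le hk)) (norm_nonneg _) zero_le_one

theorem mul_self : Parahoric p b * Parahoric p b = Parahoric p b :=
  (Set.mul_subset_iff.2 fun _ hg _ hh => mul_mem hg hh).antisymm (Set.subset_mul_right _ one_mem)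

theorem lower_mul_mem {g h : Matrix (Fin n) (Fin n) ℚ_[p]} (hg : g ∈ lower p b)
    (hh : h ∈ lower p b) : g * h ∈ lower p b :=
  ⟨mul_mem hg.1 hh.1, hg.2.mul hh.2⟩

theorem submatrix_perm_mem {σ : Equiv.Perm (Fin n)} (hσ : ∀ i, b (σ i) = b i)
    {g : Matrix (Fin n) (Fin n) ℚ_[p]} (hg : g ∈ Parahoric p b) :
    g.submatrix σ id ∈ Parahoric p b := by
  refine ⟨fun i j => hg.1 _ _, ?_, fun i j hij => hg.2.2 _ _ (by rwa [hσ])⟩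
  rcases Int.units_eq_one_or (Equiv.Perm.sign σ) with h | h <;> simp [det_permute, h, hg.2.1]

end General

section FirstColumn

variable {m : ℕ} {b : Fin (m + 1) → Fin r} {g : Matrix (Fin (m + 1)) (Fin (m + 1)) ℚ_[p]}

theorem exists_norm_eq_one (hb : Monotone b) (hg : g ∈ Parahoric p b) :
    ∃ k, b k = b 0 ∧ ‖g k 0‖ = 1 := by
  by_contra! hcon
  have hcol : ∀ k, ‖g k 0‖ ≤ (p : ℝ)⁻¹ := fun k => by
    rcases (hb (Fin.zero_le k)).eq_or_lt with h | h
    · exact Padic.norm_le_inv_of_norm_lt_one ((hg.1 k 0).lt_of_ne (hcon k h.symm))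
    · exact hg.2.2 k 0 h
  have hdet : ‖g.det‖ ≤ (p : ℝ)⁻¹ := by
    rw [det_succ_column_zero]
    refine IsUltrametricDist.norm_sum_le_of_forall_le_of_nonneg (by positivity) fun k _ => ?_
    rw [norm_mul, norm_mul, norm_pow, norm_neg, norm_one, one_pow, one_mul]
    exact (mul_le_mul (hcol k) (Padic.norm_det_le_one fun i j => hg.1 _ _)
      (norm_nonneg _) (by positivity)).trans_eq (mul_one _)
  rw [hg.2.1] at hdet
  exact (inv_lt_one_of_one_lt₀ (by exact_mod_cast (Fact.out : p.Prime).one_lt)).not_ge hdet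

theorem exists_lower_mul_norm_corner_eq_one (hb : Monotone b) (hg : g ∈ Parahoric p b) :
    ∃ L ∈ lower p b, ∃ g' ∈ Parahoric p b, ‖g' 0 0‖ = 1 ∧ g = L * g' := by
  obtain ⟨k, hk, hgk⟩ := exists_norm_eq_one hb hg
  set σ := Equiv.swap 0 k
  have hσ : ∀ i, b (σ i) = b i := fun i => by
    rw [Equiv.swap_apply_def]
    split_ifs <;> simp_all
  refine ⟨(1 : Matrix _ _ ℚ_[p]).submatrix σ id, ⟨submatrix_perm_mem hσ one_mem, ?_⟩,
    g.submatrix σ id, submatrix_perm_mem hσ hg, by simpa [σ] using hgk, ?_⟩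
  · intro i j hij
    exact one_apply_ne fun h => hij.ne' (by simp only [Function.comp_apply, ← hσ i, h]; rfl)
  · rw [submatrix_id_mul_left, Equiv.symm_swap, submatrix_one_equiv, one_mul]

theorem one_add_vecMulVec_single_mem {e : Fin (m + 1) → ℚ_[p]} (he₀ : e 0 = 0)
    (he : ∀ i, ‖e i‖ ≤ 1) (heb : ∀ i, b 0 < b i → ‖e i‖ ≤ (p : ℝ)⁻¹) :
    1 + vecMulVec e (Pi.single 0 1) ∈ Parahoric p b := by
  refine ⟨fun i j => ?_, ?_, fun i j hij => ?_⟩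
  · rw [Matrix.add_apply, vecMulVec_apply]
    refine (IsUltrametricDist.norm_add_le_max _ _).trans (max_le ?_ ?_)
    · rw [one_apply]; split_ifs <;> simp
    · rw [Pi.single_apply]; split_ifs <;> simp [he]
  · rw [det_one_add_vecMulVec (by simp [he₀])]; simp
  · rw [Matrix.add_apply, one_apply_ne (by rintro rfl; exact lt_irrefl _ hij), zero_add,
      vecMulVec_apply, Pi.single_apply]
    split_ifs with hj
    · subst hj; simpa using heb i hij
    · simp

theorem exists_lower_mul_firstCol_eq_zero (hb : Monotone b) (hg : g ∈ Parahoric p b)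
    (h₀₀ : ‖g 0 0‖ = 1) :
    ∃ L ∈ lower p b, ∃ g' ∈ Parahoric p b, (∀ i : Fin m, g' i.succ 0 = 0) ∧ g = L * g' := by
  have h₀₀' : g 0 0 ≠ 0 := by rintro h; simp [h] at h₀₀
  set e : Fin (m + 1) → ℚ_[p] := Fin.cons 0 fun i => g i.succ 0 / g 0 0
  have he : ∀ i, ‖e i‖ ≤ ‖g i 0‖ := Fin.cases (by simp [e]) fun i => by simp [e, h₀₀]
  have hmem : ∀ e' : Fin (m + 1) → ℚ_[p], e' 0 = 0 → (∀ i, ‖e' i‖ ≤ ‖g i 0‖) →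
      1 + vecMulVec e' (Pi.single 0 1) ∈ Parahoric p b := fun e' h₀ hle =>
    one_add_vecMulVec_single_mem h₀ (fun i => (hle i).trans (hg.1 i 0))
      fun i hi => (hle i).trans (hg.2.2 i 0 hi)
  have hlower : (1 + vecMulVec e (Pi.single 0 1)).BlockTriangular (toDual ∘ b) := by
    intro i j hij
    have hj : j ≠ 0 := by rintro rfl; exact (hb (Fin.zero_le i)).not_gt hij
    have hij' : i ≠ j := by rintro rfl; exact lt_irrefl _ hij
    simp [one_apply_ne hij', vecMulVec_apply, hj]
  refine ⟨_, ⟨hmem e rfl he, hlower⟩, _, mul_mem (hmem (-e) (by simp [e]) (by simpa using he)) hg,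
    fun i => ?_, ?_⟩
  · simp [add_mul, vecMulVec_mul, vecMulVec_apply, e, h₀₀']
  · rw [← mul_assoc, one_add_vecMulVec_mul_one_add_vecMulVec_neg (by simp [e]), one_mul]

theorem norm_corner_eq_one_and_submatrix_mem (hg : g ∈ Parahoric p b)
    (hcol : ∀ i : Fin m, g i.succ 0 = 0) :
    ‖g 0 0‖ = 1 ∧ g.submatrix Fin.succ Fin.succ ∈ Parahoric p (b ∘ Fin.succ) := by
  have hdet := hg.2.1
  rw [eq_upperCons_of_col_zero hcol, det_upperCons, norm_mul] at hdet
  have ha : ‖g 0 0‖ ≤ 1 := hg.1 0 0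
  have hc : ‖(g.submatrix Fin.succ Fin.succ).det‖ ≤ 1 :=
    Padic.norm_det_le_one fun i j => hg.1 _ _
  have ha' : ‖g 0 0‖ = 1 := le_antisymm ha (by nlinarith [norm_nonneg (g 0 0)])
  refine ⟨ha', fun i j => hg.1 _ _, ?_, fun i j hij => hg.2.2 _ _ hij⟩
  rwa [ha', one_mul] at hdet

theorem upperCons_mem (hb : Monotone b) {a : ℚ_[p]} {v : Fin m → ℚ_[p]}
    {M : Matrix (Fin m) (Fin m) ℚ_[p]} (ha : ‖a‖ = 1) (hv : ∀ j, ‖v j‖ ≤ 1)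
    (hM : M ∈ Parahoric p (b ∘ Fin.succ)) : upperCons a v M ∈ Parahoric p b := by
  refine ⟨fun i j => ?_, by rw [det_upperCons, norm_mul, ha, hM.2.1, one_mul], fun i j hij => ?_⟩
  · cases i using Fin.cases <;> cases j using Fin.cases <;> simp [ha, hv, hM.1]
  · cases i using Fin.cases <;> cases j using Fin.cases
    · exact absurd hij (lt_irrefl _)
    · exact absurd hij (hb (Fin.zero_le _)).not_gt
    · simp
    · exact hM.2.2 _ _ hij

end FirstColumn

theorem mem_lower_mul_upper : ∀ {n : ℕ} {b : Fin n → Fin r}, Monotone b →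
    ∀ {g : Matrix (Fin n) (Fin n) ℚ_[p]}, g ∈ Parahoric p b → g ∈ lower p b * upper p b
  | 0, _, _, _, _ =>
    ⟨1, ⟨one_mem, fun i => i.elim0⟩, 1, ⟨one_mem, fun i => i.elim0⟩, Subsingleton.elim _ _⟩
  | m + 1, b, hb, g, hg => by
    obtain ⟨L₁, hL₁, g₁, hg₁, h₁, rfl⟩ := exists_lower_mul_norm_corner_eq_one hb hg
    obtain ⟨L₂, hL₂, g₂, hg₂, hcol, rfl⟩ := exists_lower_mul_firstCol_eq_zero hb hg₁ h₁
    obtain ⟨ha, hC⟩ := norm_corner_eq_one_and_submatrix_mem hg₂ hcol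
    obtain ⟨L, hL, U, hU, hLU⟩ :=
      Set.mem_mul.1 (mem_lower_mul_upper (hb.comp Fin.strictMono_succ.monotone) hC)
    have hL₃ : upperCons 1 0 L ∈ lower p b :=
      ⟨upperCons_mem hb (by simp) (by simp) hL.1, blockTriangular_upperCons _ _ _ (by simp) hL.2⟩
    have hU₃ : upperCons (g₂ 0 0) (fun j => g₂ 0 j.succ) U ∈ upper p b :=
      ⟨upperCons_mem hb ha (fun j => hg₂.1 _ _) hU.1, blockTriangular_upperCons _ _ _
        (fun j hj => absurd hj (hb (Fin.zero_le _)).not_gt) hU.2⟩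
    refine Set.mem_mul.2 ⟨_, lower_mul_mem (lower_mul_mem hL₁ hL₂) hL₃, _, hU₃, ?_⟩
    rw [mul_assoc (L₁ * L₂), upperCons_mul_upperCons, hLU, one_mul, one_smul, zero_vecMul,
      add_zero, ← eq_upperCons_of_col_zero hcol, mul_assoc]

section Conjugation

variable {n : ℕ} {b : Fin n → Fin r} {μ : Fin n → ℤ}

theorem tdiag_conj_mem {M : Matrix (Fin n) (Fin n) ℚ_[p]} (hM : M ∈ Parahoric p b)
    (hμ : ∀ i j, M i j ≠ 0 → μ j ≤ μ i) : tdiag p μ * M * tdiag p (-μ) ∈ Parahoric p b := by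
  have hle := fun i j => norm_tdiag_conj_apply_le (p := p) (hμ i j)
  refine ⟨fun i j => (hle i j).trans (hM.1 i j), ?_,
    fun i j hij => (hle i j).trans (hM.2.2 i j hij)⟩
  rw [det_mul, det_mul, mul_right_comm, ← det_mul, tdiag_mul_tdiag, add_neg_cancel, tdiag_zero,
    det_one, one_mul, hM.2.1]

theorem tdiag_conj_mem_of_lower (hμ : ∀ i j, b i ≤ b j → μ i ≤ μ j)
    {L : Matrix (Fin n) (Fin n) ℚ_[p]} (hL : L ∈ lower p b) :
    tdiag p μ * L * tdiag p (-μ) ∈ Parahoric p b :=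
  tdiag_conj_mem hL.1 fun i j h => hμ j i (not_lt.1 fun hij => h (hL.2 hij))

theorem tdiag_neg_conj_mem_of_upper (hμ : ∀ i j, b i ≤ b j → μ i ≤ μ j)
    {U : Matrix (Fin n) (Fin n) ℚ_[p]} (hU : U ∈ upper p b) :
    tdiag p (-μ) * U * tdiag p μ ∈ Parahoric p b := by
  simpa using tdiag_conj_mem (μ := -μ) hU.1
    fun i j h => neg_le_neg (hμ i j (not_lt.1 fun hij => h (hU.2 hij)))

theorem singleton_mul_mul_singleton_subset (hb : Monotone b) {μ₁ μ₂ : Fin n → ℤ}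
    (hμ₁ : ∀ i j, b i ≤ b j → μ₁ i ≤ μ₁ j) (hμ₂ : ∀ i j, b i ≤ b j → μ₂ i ≤ μ₂ j) :
    {tdiag p μ₁} * Parahoric p b * {tdiag p μ₂} ⊆
      Parahoric p b * {tdiag p μ₁ * tdiag p μ₂} * Parahoric p b := by
  rintro _ ⟨_, ⟨_, rfl, g, hg, rfl⟩, _, rfl, rfl⟩
  obtain ⟨L, hL, U, hU, rfl⟩ := Set.mem_mul.1 (mem_lower_mul_upper hb hg)
  refine ⟨_, ⟨_, tdiag_conj_mem_of_lower hμ₁ hL, _, rfl, rfl⟩, _,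
    tdiag_neg_conj_mem_of_upper hμ₂ hU, ?_⟩
  have h₁ : tdiag p (-μ₁) * tdiag p μ₁ = 1 := by rw [tdiag_mul_tdiag, neg_add_cancel, tdiag_zero]
  have h₂ : tdiag p μ₂ * tdiag p (-μ₂) = 1 := by rw [tdiag_mul_tdiag, add_neg_cancel, tdiag_zero]
  simp only [mul_assoc]
  rw [← mul_assoc (tdiag p (-μ₁)), h₁, one_mul, ← mul_assoc (tdiag p μ₂), h₂, one_mul]

end Conjugation

end Parahoric

theorem le_of_block_le {n r : ℕ} {b : Fin n → Fin r} (hb : Monotone b) {μ : Fin n → ℤ}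
    (hμ : Monotone μ) (hμb : ∀ i i', b i = b i' → μ i = μ i') {i j : Fin n} (h : b i ≤ b j) :
    μ i ≤ μ j :=
  h.eq_or_lt.elim (fun h => (hμb i j h).le) fun h => hμ (hb.reflect_lt h).le

theorem statement7_general (p : ℕ) [Fact p.Prime] (n r : ℕ)
    (b : Fin n → Fin r) (hb : Monotone b)
    (μ₁ μ₂ : Fin n → ℤ) (hμ₁m : Monotone μ₁) (hμ₂m : Monotone μ₂)
    (hμ₁b : ∀ i i' : Fin n, b i = b i' → μ₁ i = μ₁ i')
    (hμ₂b : ∀ i i' : Fin n, b i = b i' → μ₂ i = μ₂ i') :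
    Parahoric p b * {tdiag p μ₁} * Parahoric p b * {tdiag p μ₂} * Parahoric p b =
      Parahoric p b * {tdiag p μ₁ * tdiag p μ₂} * Parahoric p b :=
  double_coset_mul_eq Parahoric.mul_self Parahoric.one_mem <|
    Parahoric.singleton_mul_mul_singleton_subset hb
      (fun _ _ => le_of_block_le hb hμ₁m hμ₁b) (fun _ _ => le_of_block_le hb hμ₂m hμ₂b)

/-- double coset identity from the proof of Lemma 2.21, `GL_n` case:
for `μ₁, μ₂` antidominant and constant on blocks, `𝒫 h₁ 𝒫 h₂ 𝒫 = 𝒫 h₁h₂ 𝒫` where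
`h_a = t_{μ_a}`. -/
theorem statement7 (p : ℕ) [Fact p.Prime] (n r : ℕ)
    (b : Fin n → Fin r) (hb : Monotone b) (hbs : Function.Surjective b)
    (μ₁ μ₂ : Fin n → ℤ) (hμ₁m : Monotone μ₁) (hμ₂m : Monotone μ₂)
    (hμ₁b : ∀ i i' : Fin n, b i = b i' → μ₁ i = μ₁ i')
    (hμ₂b : ∀ i i' : Fin n, b i = b i' → μ₂ i = μ₂ i') :
    Parahoric p b * {tdiag p μ₁} * Parahoric p b * {tdiag p μ₂} * Parahoric p b =
      Parahoric p b * {tdiag p μ₁ * tdiag p μ₂} * Parahoric p b :=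
  statement7_general p n r b hb μ₁ μ₂ hμ₁m hμ₂m hμ₁b hμ₂b
end

section
/- (Claim from the proof of Proposition 2.23, GL_n case: 𝒫hK ∩ Kh𝒫 = 𝒫h𝒫.) Fix a block function b : {1,…,n} → {1,…,r} with parahoric 𝒫 = {g ∈ GL_n(ℤ_p) : g_{ij} ∈ pℤ_p whenever b(i) > b(j)}, and set K = GL_n(ℤ_p). Let μ : {1,…,n} → ℤ be constant on blocks (μ(i) = μ(i') whenever b(i) = b(i')) and strictly increasing across blocks (μ(i) < μ(j) whenever b(i) < b(j)), and let h = t_μ. Then 𝒫·h·K ∩ K·h·𝒫 = 𝒫·h·𝒫 as subsets of GL_n(ℚ_p). -/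
open Pointwise

/-- `K = GL_n(ℤ_p)` as a set of matrices over `ℚ_p`. -/
def GLZset (p : ℕ) [Fact p.Prime] (n : ℕ) : Set (Matrix (Fin n) (Fin n) ℚ_[p]) :=
  {g | (∀ i j, ‖g i j‖ ≤ 1) ∧ ‖g.det‖ = 1}

namespace Statement9Aux

open IsUltrametricDist

variable {p : ℕ} [Fact p.Prime] {n : ℕ}

lemma det_norm_le_one {A : Matrix (Fin n) (Fin n) ℚ_[p]} (h : ∀ i j, ‖A i j‖ ≤ 1) :
    ‖A.det‖ ≤ 1 := by
  rw [Matrix.det_apply]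
  apply norm_sum_le_of_forall_le_of_nonneg zero_le_one
  intro σ _
  rw [Units.smul_def, zsmul_eq_mul]
  calc ‖((Equiv.Perm.sign σ : ℤ) : ℚ_[p]) * ∏ i, A (σ i) i‖
      = ‖((Equiv.Perm.sign σ : ℤ) : ℚ_[p])‖ * ‖∏ i, A (σ i) i‖ := norm_mul _ _
    _ ≤ 1 * 1 := by
        apply mul_le_mul _ _ (norm_nonneg _) zero_le_one
        · rcases Int.units_eq_one_or (Equiv.Perm.sign σ) with h1 | h1 <;> simp [h1]
        · rw [norm_prod]
          exact Finset.prod_le_one (fun i _ => norm_nonneg _) (fun i _ => h _ _)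
    _ = 1 := one_mul 1

lemma K_mul {A B : Matrix (Fin n) (Fin n) ℚ_[p]} (hA : A ∈ GLZset p n) (hB : B ∈ GLZset p n) :
    A * B ∈ GLZset p n := by
  refine ⟨fun i j => ?_, ?_⟩
  · rw [Matrix.mul_apply]
    apply norm_sum_le_of_forall_le_of_nonneg zero_le_one
    intro k _
    calc ‖A i k * B k j‖ = ‖A i k‖ * ‖B k j‖ := norm_mul _ _
      _ ≤ 1 * 1 := mul_le_mul (hA.1 i k) (hB.1 k j) (norm_nonneg _) zero_le_one
      _ = 1 := one_mul 1
  · rw [Matrix.det_mul, norm_mul, hA.2, hB.2, one_mul]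

lemma K_detUnit {A : Matrix (Fin n) (Fin n) ℚ_[p]} (hA : A ∈ GLZset p n) :
    IsUnit A.det := by
  apply isUnit_iff_ne_zero.mpr
  intro h0
  have := hA.2
  rw [h0, norm_zero] at this
  exact zero_ne_one this

lemma K_inv {A : Matrix (Fin n) (Fin n) ℚ_[p]} (hA : A ∈ GLZset p n) :
    A⁻¹ ∈ GLZset p n := by
  have hdet : IsUnit A.det := K_detUnit hA
  constructor
  · intro i j
    rw [Matrix.nonsing_inv_apply _ hdet, Matrix.smul_apply, smul_eq_mul, norm_mul]
    have h1 : ‖(↑hdet.unit⁻¹ : ℚ_[p])‖ = 1 := by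
      have : (↑hdet.unit⁻¹ : ℚ_[p]) * A.det = 1 := IsUnit.val_inv_mul hdet
      have h2 := congrArg norm this
      rw [norm_mul, hA.2, mul_one, norm_one] at h2
      exact h2
    rw [h1, one_mul]
    rw [Matrix.adjugate_apply]
    apply det_norm_le_one
    intro k l
    rw [Matrix.updateRow_apply]
    split
    · rcases eq_or_ne i l with h | h <;> simp [Pi.single_apply, h]
    · exact hA.1 k l
  · rw [Matrix.det_nonsing_inv, Ring.inverse_eq_inv, norm_inv, hA.2, inv_one]

variable {r : ℕ} {b : Fin n → Fin r}

lemma P_sub_K {A : Matrix (Fin n) (Fin n) ℚ_[p]} (hA : A ∈ Parahoric p b) :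
    A ∈ GLZset p n := ⟨hA.1, hA.2.1⟩

omit [Fact p.Prime] in
lemma pinv_nonneg : (0:ℝ) ≤ (p : ℝ)⁻¹ := by positivity

lemma P_mul {A B : Matrix (Fin n) (Fin n) ℚ_[p]}
    (hA : A ∈ Parahoric p b) (hB : B ∈ Parahoric p b) : A * B ∈ Parahoric p b := by
  have hK := K_mul (P_sub_K hA) (P_sub_K hB)
  refine ⟨hK.1, hK.2, fun i j hij => ?_⟩
  rw [Matrix.mul_apply]
  apply norm_sum_le_of_forall_le_of_nonneg pinv_nonneg
  intro k _
  rw [norm_mul]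
  rcases le_or_gt (b k) (b j) with hk | hk
  · calc ‖A i k‖ * ‖B k j‖ ≤ (p:ℝ)⁻¹ * 1 :=
        mul_le_mul (hA.2.2 i k (lt_of_le_of_lt hk hij)) (hB.1 k j) (norm_nonneg _) pinv_nonneg
      _ = (p:ℝ)⁻¹ := mul_one _
  · calc ‖A i k‖ * ‖B k j‖ ≤ 1 * (p:ℝ)⁻¹ :=
        mul_le_mul (hA.1 i k) (hB.2.2 k j hk) (norm_nonneg _) zero_le_one
      _ = (p:ℝ)⁻¹ := one_mul _

lemma one_lt_p : (1:ℝ) < (p:ℝ) := by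
  exact_mod_cast (Fact.out : p.Prime).one_lt

lemma mem_P_of_conj {μ : Fin n → ℤ}
    (hμs : ∀ i j : Fin n, b i < b j → μ i < μ j)
    {w : Matrix (Fin n) (Fin n) ℚ_[p]} (hw : w ∈ GLZset p n)
    (hc : tdiag p (fun i => -μ i) * w * tdiag p μ ∈ GLZset p n) :
    w ∈ Parahoric p b := by
  refine ⟨hw.1, hw.2, fun i j hij => ?_⟩
  have hμ : μ j < μ i := hμs j i hij
  have hentry := hc.1 i j
  have hval : (tdiag p (fun i => -μ i) * w * tdiag p μ) i j
      = (p : ℚ_[p]) ^ (-μ i) * w i j * (p : ℚ_[p]) ^ (μ j) := by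
    rw [tdiag, tdiag, Matrix.mul_diagonal, Matrix.diagonal_mul]
  rw [hval, norm_mul, norm_mul, Padic.norm_p_zpow, Padic.norm_p_zpow] at hentry
  have hp0 : (0:ℝ) < (p:ℝ) := lt_trans zero_lt_one one_lt_p
  have hp1 : (0:ℝ) < (p:ℝ) ^ (- -μ i) := zpow_pos hp0 _
  have hp2 : (0:ℝ) < (p:ℝ) ^ (-μ j) := zpow_pos hp0 _
  have hc0 : (0:ℝ) < (p:ℝ) ^ (- -μ i) * (p:ℝ) ^ (-μ j) := mul_pos hp1 hp2
  have key : ((p:ℝ) ^ (- -μ i) * (p:ℝ) ^ (-μ j))⁻¹ = (p:ℝ) ^ (μ j - μ i) := by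
    rw [← zpow_add₀ hp0.ne', ← zpow_neg]
    congr 1
    ring
  have hent2 : ‖w i j‖ * ((p:ℝ) ^ (- -μ i) * (p:ℝ) ^ (-μ j)) ≤ 1 := by
    calc ‖w i j‖ * ((p:ℝ) ^ (- -μ i) * (p:ℝ) ^ (-μ j))
        = (p:ℝ) ^ (- -μ i) * ‖w i j‖ * (p:ℝ) ^ (-μ j) := by ring
      _ ≤ 1 := hentry
  have h1 : ‖w i j‖ ≤ (p:ℝ) ^ (μ j - μ i) := by
    have h2 := mul_le_mul_of_nonneg_right hent2 (inv_nonneg.mpr hc0.le)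
    rw [one_mul, mul_assoc, mul_inv_cancel₀ hc0.ne', mul_one, key] at h2
    exact h2
  calc ‖w i j‖ ≤ (p:ℝ) ^ (μ j - μ i) := h1
    _ ≤ (p:ℝ) ^ (-1 : ℤ) := zpow_le_zpow_right₀ (le_of_lt one_lt_p) (by omega)
    _ = (p:ℝ)⁻¹ := zpow_neg_one _

lemma tdiag_neg_mul (μ : Fin n → ℤ) :
    tdiag p (fun i => -μ i) * tdiag p μ = 1 := by
  have hp : (p : ℚ_[p]) ≠ 0 := Nat.cast_ne_zero.mpr (Fact.out : p.Prime).ne_zero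
  rw [tdiag, tdiag, Matrix.diagonal_mul_diagonal, ← Matrix.diagonal_one]
  have hfun : (fun i => (p:ℚ_[p]) ^ (-μ i) * (p:ℚ_[p]) ^ (μ i)) = fun _ => (1:ℚ_[p]) := by
    funext i
    rw [← zpow_add₀ hp, neg_add_cancel, zpow_zero]
  rw [hfun]

end Statement9Aux

open Statement9Aux in
/-- claim from the proof of Proposition 2.23, `GL_n` case: for `μ`
constant on blocks and strictly increasing across blocks, and `h = t_μ`,
`𝒫 h K ∩ K h 𝒫 = 𝒫 h 𝒫`. -/
theorem statement9 (p : ℕ) [Fact p.Prime] (n r : ℕ)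
    (b : Fin n → Fin r) (hb : Monotone b) (hbs : Function.Surjective b)
    (μ : Fin n → ℤ)
    (hμb : ∀ i i' : Fin n, b i = b i' → μ i = μ i')
    (hμs : ∀ i j : Fin n, b i < b j → μ i < μ j) :
    Parahoric p b * {tdiag p μ} * GLZset p n ∩ (GLZset p n * {tdiag p μ} * Parahoric p b) =
      Parahoric p b * {tdiag p μ} * Parahoric p b := by
  apply Set.Subset.antisymm
  · rintro x ⟨hx1, hx2⟩
    obtain ⟨u, hu, k, hk, rfl⟩ := Set.mem_mul.mp hx1
    obtain ⟨q, hq, t1, ht1, rfl⟩ := Set.mem_mul.mp hu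
    rw [Set.mem_singleton_iff] at ht1; subst ht1
    obtain ⟨v, hv, q', hq', he⟩ := Set.mem_mul.mp hx2
    obtain ⟨k', hk', t2, ht2, rfl⟩ := Set.mem_mul.mp hv
    rw [Set.mem_singleton_iff] at ht2; subst ht2
    -- he : k' * tdiag p μ * q' = q * tdiag p μ * k
    have hdq : IsUnit q.det := K_detUnit (P_sub_K hq)
    have hdq' : IsUnit q'.det := K_detUnit (P_sub_K hq')
    set w : Matrix (Fin n) (Fin n) ℚ_[p] := q⁻¹ * k' with hwdef
    have hqw : q * w = k' := by
      rw [hwdef, ← mul_assoc, Matrix.mul_nonsing_inv _ hdq, one_mul]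
    have e1 : w * tdiag p μ * q' = tdiag p μ * k := by
      have h3 : q⁻¹ * (k' * tdiag p μ * q') = q⁻¹ * (q * tdiag p μ * k) := by rw [he]
      calc w * tdiag p μ * q' = q⁻¹ * (k' * tdiag p μ * q') := by
            simp only [hwdef, mul_assoc]
        _ = q⁻¹ * (q * tdiag p μ * k) := h3
        _ = (q⁻¹ * q) * (tdiag p μ * k) := by simp only [mul_assoc]
        _ = tdiag p μ * k := by rw [Matrix.nonsing_inv_mul _ hdq, one_mul]
    have e2 : tdiag p (fun i => -μ i) * w * tdiag p μ = k * q'⁻¹ := by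
      have h4 : w * tdiag p μ = tdiag p μ * (k * q'⁻¹) := by
        calc w * tdiag p μ = w * tdiag p μ * (q' * q'⁻¹) := by
              rw [Matrix.mul_nonsing_inv _ hdq', mul_one]
          _ = (w * tdiag p μ * q') * q'⁻¹ := by simp only [mul_assoc]
          _ = tdiag p μ * k * q'⁻¹ := by rw [e1]
          _ = tdiag p μ * (k * q'⁻¹) := by simp only [mul_assoc]
      calc tdiag p (fun i => -μ i) * w * tdiag p μ
          = tdiag p (fun i => -μ i) * (w * tdiag p μ) := by simp only [mul_assoc]
        _ = tdiag p (fun i => -μ i) * (tdiag p μ * (k * q'⁻¹)) := by rw [h4]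
        _ = (tdiag p (fun i => -μ i) * tdiag p μ) * (k * q'⁻¹) := by simp only [mul_assoc]
        _ = k * q'⁻¹ := by rw [tdiag_neg_mul, one_mul]
    have hwK : w ∈ GLZset p n := K_mul (K_inv (P_sub_K hq)) hk'
    have hcK : tdiag p (fun i => -μ i) * w * tdiag p μ ∈ GLZset p n := by
      rw [e2]; exact K_mul hk (K_inv (P_sub_K hq'))
    have hwP : w ∈ Parahoric p b := mem_P_of_conj hμs hwK hcK
    have hfin : (q * w) * tdiag p μ * q' = q * tdiag p μ * k := by rw [hqw, he]
    rw [← hfin]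
    exact Set.mul_mem_mul (Set.mul_mem_mul (P_mul hq hwP) rfl) hq'
  · intro x hx
    refine ⟨?_, ?_⟩
    · exact Set.mul_subset_mul Set.Subset.rfl (fun a ha => P_sub_K ha) hx
    · exact Set.mul_subset_mul
        (Set.mul_subset_mul (fun a ha => P_sub_K ha) Set.Subset.rfl) Set.Subset.rfl hx
end

section
/- (Coset decomposition from the proof of Proposition 6.7, GL_n minuscule case: KtK = ⋃_{w∈W} U(𝒪)ẇtK.) Let n ≥ 2 and 1 ≤ m ≤ n−1, and let t ∈ GL_n(ℚ_p) be the diagonal matrix with entries 1 in positions 1,…,m and p in positions m+1,…,n. Let U(ℤ_p) be the group of upper triangular unipotent matrices over ℤ_p, and for σ ∈ S_n let P_σ ∈ GL_n(ℤ_p) be the associated permutation matrix. Then GL_n(ℤ_p)·t·GL_n(ℤ_p) = ⋃_{σ ∈ S_n} U(ℤ_p)·P_σ·t·GL_n(ℤ_p). -/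
/-
Gaussian elimination over the local ring `ℤ_p` with upper unitriangular row operations (column by
column, always pivoting on the lowest row that still carries a unit) writes any `k ∈ GL_n(ℤ_p)` as
`u P_σ h` with `u ∈ U(ℤ_p)` and `h ∈ GL_n(ℤ_p)` upper triangular modulo `p`. Since `t` is
minuscule, `t⁻¹ h t` is still in `GL_n(ℤ_p)`: below the diagonal it divides by at most `p` entries
divisible by `p`. Hence `k t k' = u P_σ t (t⁻¹ h t k')`.
-/

open Pointwise

/-- `U(ℤ_p)`: upper triangular unipotent matrices with entries in `ℤ_p`. -/
def UpperUnipZ (p : ℕ) [Fact p.Prime] (n : ℕ) : Set (Matrix (Fin n) (Fin n) ℚ_[p]) :=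
  {u | (∀ i, u i i = 1) ∧ (∀ i j : Fin n, j < i → u i j = 0) ∧ (∀ i j, ‖u i j‖ ≤ 1)}

namespace Matrix

section Unitriangular

variable {R ι : Type*} [CommRing R] [LinearOrder ι] [Fintype ι]

theorem IsUpperTriangular.mul_apply_self {A B : Matrix ι ι R} (hA : A.IsUpperTriangular)
    (hB : B.IsUpperTriangular) (i : ι) : (A * B) i i = A i i * B i i := by
  rw [mul_apply, Finset.sum_eq_single i (fun k _ hk => ?_) (by simp)]
  rcases lt_or_gt_of_ne hk with h | h
  · rw [hA h, zero_mul]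
  · rw [hB h, mul_zero]

variable [DecidableEq ι]

variable (R ι) in
def upperUnitriangular : Submonoid (Matrix ι ι R) where
  carrier := {u | u.IsUpperTriangular ∧ ∀ i, u i i = 1}
  mul_mem' := fun ⟨hA, hA1⟩ ⟨hB, hB1⟩ =>
    ⟨hA.mul hB, fun i => by rw [hA.mul_apply_self hB, hA1, hB1, one_mul]⟩
  one_mem' := ⟨blockTriangular_one, one_apply_eq⟩

variable {u : Matrix ι ι R}

theorem det_of_mem_upperUnitriangular (hu : u ∈ upperUnitriangular R ι) : u.det = 1 := by
  simp [det_of_isUpperTriangular hu.1, hu.2]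

theorem inv_mem_upperUnitriangular (hu : u ∈ upperUnitriangular R ι) :
    u⁻¹ ∈ upperUnitriangular R ι := by
  have hdet : IsUnit u.det := by rw [det_of_mem_upperUnitriangular hu]; exact isUnit_one
  have : Invertible u := u.invertibleOfIsUnitDet hdet
  have hinv : u⁻¹.IsUpperTriangular := blockTriangular_inv_of_blockTriangular hu.1
  refine ⟨hinv, fun i => ?_⟩
  have hii := congrFun (congrFun (nonsing_inv_mul u hdet) i) i
  rwa [hinv.mul_apply_self hu.1, hu.2, mul_one, one_apply_eq] at hii

end Unitriangular

-- Every permutation diagonal meets the rectangle `s × t`, as `t` cannot be mapped into `sᶜ`.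
theorem det_mem_of_rectangle_mem {R ι : Type*} [CommRing R] [Fintype ι] [DecidableEq ι]
    {I : Ideal R} (M : Matrix ι ι R) {s t : Finset ι} (hst : Fintype.card ι < s.card + t.card)
    (h : ∀ i ∈ s, ∀ j ∈ t, M i j ∈ I) : M.det ∈ I := by
  rw [det_apply]
  refine I.sum_mem fun π _ => ?_
  obtain ⟨j, hjt, hjs⟩ : ∃ j ∈ t, π j ∈ s := by
    by_contra! hcon
    have : t.card ≤ sᶜ.card := Finset.card_le_card_of_injOn π
      (fun j hj => by simpa using hcon j hj) π.injective.injOn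
    rw [Finset.card_compl] at this
    have := s.card_le_univ
    omega
  rw [Units.smul_def]
  exact zsmul_mem (I.prod_mem (f := fun i => M (π i) i) (Finset.mem_univ j) (h _ hjs _ hjt)) _

theorem exists_upperUnitriangular_mul_eq_zero_above {R ι : Type*} [CommRing R] [LinearOrder ι]
    [Fintype ι] [DecidableEq ι] {N : Matrix ι ι R} {q j₀ : ι} (hq : IsUnit (N q j₀)) :
    ∃ E ∈ upperUnitriangular R ι, (∀ r, ∃ x : R, (E * N) r = N r + x • N q) ∧
      (∀ r < q, (E * N) r j₀ = 0) ∧ ∀ r, q < r → (E * N) r = N r := by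
  set g : ι → R := fun r => if r < q then -(N r j₀ * ↑hq.unit⁻¹) else 0
  have hgq : ∀ r, q ≤ r → g r = 0 := fun r hr => if_neg (not_lt.2 hr)
  set E : Matrix ι ι R := 1 + of fun r s => if s = q then g r else 0
  have hEN : ∀ r, (E * N) r = N r + g r • N q := fun r => by
    ext j
    simp [E, add_mul, mul_apply, ite_mul, Finset.sum_add_distrib, one_apply]
  refine ⟨E, ⟨fun i j hji => ?_, fun i => ?_⟩, fun r => ⟨g r, hEN r⟩, fun r hr => ?_,
    fun r hr => ?_⟩
  · have hji : j < i := hji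
    simp only [E, add_apply, one_apply_ne hji.ne', of_apply, zero_add]
    split_ifs with hj
    · exact hgq i (hj ▸ hji.le)
    · rfl
  · simp only [E, add_apply, one_apply_eq, of_apply]
    split_ifs with hi
    · rw [hgq i hi.ge, add_zero]
    · rw [add_zero]
  · have hgr : g r = -(N r j₀ * ↑hq.unit⁻¹) := if_pos hr
    rw [hEN, Pi.add_apply, Pi.smul_apply, smul_eq_mul, hgr, neg_mul, mul_assoc,
      hq.val_inv_mul, mul_one, add_neg_cancel]
  · rw [hEN, hgq r hr.le, zero_smul, add_zero]

section LocalRing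

open IsLocalRing

variable {R : Type*} [CommRing R] [IsLocalRing R] {n : ℕ}

/-- After reordering the rows by `σ`, the first `c` columns of `N` are upper triangular modulo the
maximal ideal. -/
def IsReducedUpTo (N : Matrix (Fin n) (Fin n) R) (σ : Equiv.Perm (Fin n)) (c : ℕ) : Prop :=
  ∀ i j : Fin n, (j : ℕ) < c → j < i → N (σ i) j ∈ maximalIdeal R

variable {N : Matrix (Fin n) (Fin n) R} {σ : Equiv.Perm (Fin n)} {c : ℕ}

theorem IsReducedUpTo.exists_isUnit (hN : IsUnit N.det) (hred : IsReducedUpTo N σ c)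
    (hc : c < n) : ∃ i : Fin n, c ≤ (i : ℕ) ∧ IsUnit (N (σ i) ⟨c, hc⟩) := by
  set c' : Fin n := ⟨c, hc⟩
  by_contra! hcon
  have hmem : (N.submatrix σ id).det ∈ maximalIdeal R := by
    refine det_mem_of_rectangle_mem _ (s := Finset.Ici c') (t := Finset.Iic c')
      (by simp only [Fintype.card_fin, Fin.card_Ici, Fin.card_Iic, c']; omega)
      fun i hi j hj => ?_
    rw [Finset.mem_Ici] at hi
    rcases (Finset.mem_Iic.1 hj).lt_or_eq with hj | rfl
    · exact hred i j hj (hj.trans_le hi)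
    · exact (mem_maximalIdeal _).2 (mem_nonunits_iff.2 (hcon i hi))
  rw [det_permute, mem_maximalIdeal, mem_nonunits_iff] at hmem
  exact hmem ((Units.isUnit _).map (Int.castRingHom R) |>.mul hN)

theorem IsReducedUpTo.exists_succ (hN : IsUnit N.det) (hred : IsReducedUpTo N σ c) (hc : c < n) :
    ∃ E ∈ upperUnitriangular R (Fin n), ∃ σ' : Equiv.Perm (Fin n),
      IsReducedUpTo (E * N) σ' (c + 1) := by
  classical
  set c' : Fin n := ⟨c, hc⟩
  set S := Finset.univ.filter fun i : Fin n => c ≤ (i : ℕ) ∧ IsUnit (N (σ i) c')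
  have hS : S.Nonempty := by
    obtain ⟨i, hi⟩ := hred.exists_isUnit hN hc
    exact ⟨i, Finset.mem_filter.2 ⟨Finset.mem_univ _, hi⟩⟩
  -- the pivot `σ i₀` is the lowest row of `N` that is still unreduced and has a unit in column `c`
  obtain ⟨i₀, hi₀S, hmax⟩ := S.exists_max_image σ hS
  obtain ⟨hi₀c, hpivot⟩ := (Finset.mem_filter.1 hi₀S).2
  obtain ⟨E, hE, hrow, hzero, hfix⟩ := exists_upperUnitriangular_mul_eq_zero_above hpivot
  refine ⟨E, hE, σ * Equiv.swap c' i₀, fun i j hjc hji => ?_⟩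
  rw [Equiv.Perm.mul_apply]
  set t := Equiv.swap c' i₀ i
  rcases Nat.lt_succ_iff_lt_or_eq.1 hjc with hj | hj
  · -- columns already reduced stay reduced: the pivot row is small there
    have hjt : j < t := by
      simp only [t, Equiv.swap_apply_def]
      split_ifs
      exacts [hj.trans_le hi₀c, Fin.lt_def.2 hj, hji]
    obtain ⟨x, hx⟩ := hrow (σ t)
    rw [hx, Pi.add_apply, Pi.smul_apply, smul_eq_mul]
    exact add_mem (hred t j hj hjt) (Ideal.mul_mem_left _ _ (hred i₀ j hj (hj.trans_le hi₀c)))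
  · obtain rfl : j = c' := Fin.ext hj
    have hic : i ≠ c' := hji.ne'
    have hti₀ : t ≠ i₀ := by simp [t, Equiv.swap_apply_eq_iff, hic]
    have htc : c ≤ (t : ℕ) := by
      simp only [t, Equiv.swap_apply_def]
      split_ifs
      exacts [hi₀c, le_rfl, hji.le]
    rcases lt_or_gt_of_ne (σ.injective.ne hti₀) with hlt | hgt
    · rw [hzero _ hlt]
      exact zero_mem _
    · rw [hfix _ hgt, mem_maximalIdeal, mem_nonunits_iff]
      exact fun hunit => (hmax t (Finset.mem_filter.2 ⟨Finset.mem_univ _, htc, hunit⟩)).not_gt hgt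

theorem exists_isReducedUpTo (hN : IsUnit N.det) :
    ∀ c ≤ n, ∃ v ∈ upperUnitriangular R (Fin n), ∃ σ : Equiv.Perm (Fin n),
      IsReducedUpTo (v * N) σ c
  | 0, _ => ⟨1, one_mem _, 1, fun _ _ hj => absurd hj (Nat.not_lt_zero _)⟩
  | c + 1, hc => by
    obtain ⟨v, hv, σ, hred⟩ := exists_isReducedUpTo hN c (Nat.le_of_succ_le hc)
    have hvN : IsUnit (v * N).det := by rwa [det_mul, det_of_mem_upperUnitriangular hv, one_mul]
    obtain ⟨E, hE, σ', hred'⟩ := hred.exists_succ hvN hc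
    exact ⟨E * v, mul_mem hE hv, σ', by rwa [mul_assoc]⟩

theorem exists_upperUnitriangular_permMatrix_mul (hN : IsUnit N.det) :
    ∃ u ∈ upperUnitriangular R (Fin n), ∃ σ : Equiv.Perm (Fin n), ∃ h : Matrix (Fin n) (Fin n) R,
      IsUnit h.det ∧ (∀ i j, j < i → h i j ∈ maximalIdeal R) ∧ N = u * σ.permMatrix R * h := by
  obtain ⟨v, hv, σ, hred⟩ := exists_isReducedUpTo hN n le_rfl
  have hvdet := det_of_mem_upperUnitriangular hv
  refine ⟨v⁻¹, inv_mem_upperUnitriangular hv, σ⁻¹, σ.permMatrix R * (v * N), ?_,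
    fun i j hji => ?_, ?_⟩
  · rw [det_mul, det_mul, hvdet, one_mul, det_permutation]
    exact ((Units.isUnit _).map (Int.castRingHom R)).mul hN
  · rw [PEquiv.toMatrix_toPEquiv_mul]
    exact hred i j j.isLt hji
  · rw [mul_assoc, ← mul_assoc (σ⁻¹.permMatrix R), ← permMatrix_mul, mul_inv_cancel,
      permMatrix_one, one_mul, ← mul_assoc, nonsing_inv_mul _ (hvdet ▸ isUnit_one), one_mul]

end LocalRing

end Matrix

section Padic

open Matrix

variable {p : ℕ} [Fact p.Prime] {n : ℕ}

theorem map_mem_GLZset {g : Matrix (Fin n) (Fin n) ℤ_[p]} (hg : IsUnit g.det) :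
    g.map PadicInt.Coe.ringHom ∈ GLZset p n :=
  ⟨fun _ _ => PadicInt.norm_le_one _,
    (congrArg norm (RingHom.map_det _ g)).symm.trans (PadicInt.isUnit_iff.1 hg)⟩

theorem exists_map_eq_of_mem_GLZset {g : Matrix (Fin n) (Fin n) ℚ_[p]} (hg : g ∈ GLZset p n) :
    ∃ g' : Matrix (Fin n) (Fin n) ℤ_[p], IsUnit g'.det ∧ g'.map PadicInt.Coe.ringHom = g := by
  set g' : Matrix (Fin n) (Fin n) ℤ_[p] := of fun i j => ⟨g i j, hg.1 i j⟩
  have hdet : PadicInt.Coe.ringHom g'.det = g.det := RingHom.map_det _ g'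
  exact ⟨g', PadicInt.isUnit_iff.2 ((congrArg norm hdet).trans hg.2), rfl⟩

theorem mul_mem_GLZset {g h : Matrix (Fin n) (Fin n) ℚ_[p]} (hg : g ∈ GLZset p n)
    (hh : h ∈ GLZset p n) : g * h ∈ GLZset p n := by
  obtain ⟨g', hg', rfl⟩ := exists_map_eq_of_mem_GLZset hg
  obtain ⟨h', hh', rfl⟩ := exists_map_eq_of_mem_GLZset hh
  rw [← Matrix.map_mul]
  exact map_mem_GLZset (by rw [det_mul]; exact hg'.mul hh')

theorem permMatrix_mem_GLZset (σ : Equiv.Perm (Fin n)) : σ.permMatrix ℚ_[p] ∈ GLZset p n := by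
  rw [Equiv.Perm.permMatrix, ← PEquiv.map_toMatrix PadicInt.Coe.ringHom]
  exact map_mem_GLZset (by rw [det_permutation]; exact (Units.isUnit _).map (Int.castRingHom _))

theorem upperUnipZ_subset_GLZset : UpperUnipZ p n ⊆ GLZset p n := fun _ ⟨hdiag, hlow, hint⟩ =>
  ⟨hint, by simp [det_of_isUpperTriangular (fun i j hij => hlow i j hij), hdiag]⟩

theorem map_mem_upperUnipZ {u : Matrix (Fin n) (Fin n) ℤ_[p]}
    (hu : u ∈ upperUnitriangular ℤ_[p] (Fin n)) : u.map PadicInt.Coe.ringHom ∈ UpperUnipZ p n :=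
  ⟨fun i => by simp [hu.2 i], fun _ _ hij => by simp [hu.1 hij],
    fun _ _ => PadicInt.norm_le_one _⟩

theorem exists_upperUnipZ_permMatrix_mul {k : Matrix (Fin n) (Fin n) ℚ_[p]}
    (hk : k ∈ GLZset p n) :
    ∃ u ∈ UpperUnipZ p n, ∃ σ : Equiv.Perm (Fin n), ∃ h ∈ GLZset p n,
      (∀ i j, j < i → ‖h i j‖ ≤ (p : ℝ)⁻¹) ∧ k = u * σ.permMatrix ℚ_[p] * h := by
  obtain ⟨k', hk', rfl⟩ := exists_map_eq_of_mem_GLZset hk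
  obtain ⟨u, hu, σ, h, hh, hlow, rfl⟩ := exists_upperUnitriangular_permMatrix_mul hk'
  refine ⟨_, map_mem_upperUnipZ hu, σ, _, map_mem_GLZset hh, fun i j hji => ?_,
    by rw [Matrix.map_mul, Matrix.map_mul, PEquiv.map_toMatrix]⟩
  have hmem := hlow i j hji
  rw [PadicInt.maximalIdeal_eq_span_p, Ideal.mem_span_singleton'] at hmem
  obtain ⟨x, hx⟩ := hmem
  calc ‖h.map PadicInt.Coe.ringHom i j‖ = ‖x‖ * ‖(p : ℤ_[p])‖ := by
        rw [map_apply, ← hx]; exact norm_mul x _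
    _ ≤ 1 * (p : ℝ)⁻¹ := by rw [PadicInt.norm_p]; gcongr; exact x.norm_le_one
    _ = (p : ℝ)⁻¹ := one_mul _

/-- The valuations of the entries of `d` are nondecreasing and vary by at most one. -/
def IsMinusculeDiag (d : Fin n → ℚ_[p]) : Prop :=
  (∀ i, d i ≠ 0) ∧ (∀ i j, i ≤ j → ‖d j‖ ≤ ‖d i‖) ∧ ∀ i j, ‖d j‖ ≤ p * ‖d i‖

theorem isMinusculeDiag_ite (m : ℕ) :
    IsMinusculeDiag fun i : Fin n => if (i : ℕ) < m then 1 else (p : ℚ_[p]) := by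
  have hnorm (i : Fin n) : ‖if (i : ℕ) < m then 1 else (p : ℚ_[p])‖ =
      if (i : ℕ) < m then 1 else (p : ℝ)⁻¹ := by
    split_ifs <;> simp [Padic.norm_p]
  have hp : (1 : ℝ) < p := by exact_mod_cast (Fact.out : p.Prime).one_lt
  have hpinv : (p : ℝ)⁻¹ ≤ 1 := inv_le_one_of_one_le₀ hp.le
  have hpp : (p : ℝ) * (p : ℝ)⁻¹ = 1 := mul_inv_cancel₀ (by positivity)
  refine ⟨fun i => by dsimp only; split_ifs <;> simp [(Fact.out : p.Prime).ne_zero],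
    fun i j hij => ?_, fun i j => ?_⟩
  · rw [hnorm, hnorm]
    split_ifs with hj hi hi <;> try simp only [le_refl, hpinv]
    exact absurd (Fin.le_def.1 hij) (by omega)
  · rw [hnorm, hnorm]
    split_ifs <;> linarith

theorem exists_mul_diagonal_eq_diagonal_mul {d : Fin n → ℚ_[p]} (hd : IsMinusculeDiag d)
    {h : Matrix (Fin n) (Fin n) ℚ_[p]} (hh : h ∈ GLZset p n)
    (hlow : ∀ i j, j < i → ‖h i j‖ ≤ (p : ℝ)⁻¹) :
    ∃ h' ∈ GLZset p n, h * diagonal d = diagonal d * h' := by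
  obtain ⟨hd0, hanti, hmin⟩ := hd
  set h' : Matrix (Fin n) (Fin n) ℚ_[p] := of fun i j => (d i)⁻¹ * h i j * d j
  have heq : h * diagonal d = diagonal d * h' := by
    ext i j
    simp only [h', mul_diagonal, diagonal_mul, of_apply]
    field_simp [hd0 i]
  refine ⟨h', ⟨fun i j => ?_, ?_⟩, heq⟩
  · simp only [h', of_apply, norm_mul, norm_inv]
    rw [mul_assoc, inv_mul_le_iff₀ (norm_pos_iff.2 (hd0 i)), mul_one]
    rcases le_or_gt i j with hij | hji
    · calc ‖h i j‖ * ‖d j‖ ≤ 1 * ‖d i‖ :=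
            mul_le_mul (hh.1 i j) (hanti i j hij) (norm_nonneg _) zero_le_one
        _ = ‖d i‖ := one_mul _
    · have hp : (0 : ℝ) < p := by exact_mod_cast (Fact.out : p.Prime).pos
      calc ‖h i j‖ * ‖d j‖ ≤ (p : ℝ)⁻¹ * (p * ‖d i‖) :=
            mul_le_mul (hlow i j hji) (hmin i j) (norm_nonneg _) (by positivity)
        _ = ‖d i‖ := by field_simp
  · have hD : (diagonal d).det ≠ 0 := by
      rw [det_diagonal]
      exact Finset.prod_ne_zero_iff.2 fun i _ => hd0 i
    have hdet := congrArg det heq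
    rw [det_mul, det_mul, mul_comm] at hdet
    rw [← mul_left_cancel₀ hD hdet, hh.2]

theorem GLZset_mul_diagonal_mul_GLZset_eq_iUnion {d : Fin n → ℚ_[p]} (hd : IsMinusculeDiag d) :
    GLZset p n * {diagonal d} * GLZset p n =
      ⋃ σ : Equiv.Perm (Fin n),
        UpperUnipZ p n * {σ.permMatrix ℚ_[p]} * {diagonal d} * GLZset p n := by
  ext x
  simp only [Set.mem_iUnion]
  constructor
  · rintro ⟨_, ⟨k, hk, _, rfl, rfl⟩, k', hk', rfl⟩
    obtain ⟨u, hu, σ, h, hh, hlow, rfl⟩ := exists_upperUnipZ_permMatrix_mul hk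
    obtain ⟨h', hh', hconj⟩ := exists_mul_diagonal_eq_diagonal_mul hd hh hlow
    refine ⟨σ, _, Set.mul_mem_mul (Set.mul_mem_mul hu rfl) rfl, h' * k', mul_mem_GLZset hh' hk',
      ?_⟩
    show u * σ.permMatrix ℚ_[p] * diagonal d * (h' * k') =
      u * σ.permMatrix ℚ_[p] * h * diagonal d * k'
    rw [mul_assoc _ h, hconj]
    simp only [mul_assoc]
  · rintro ⟨σ, _, ⟨_, ⟨u, hu, _, rfl, rfl⟩, _, rfl, rfl⟩, k, hk, rfl⟩
    exact Set.mul_mem_mul (Set.mul_mem_mul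
      (mul_mem_GLZset (upperUnipZ_subset_GLZset hu) (permMatrix_mem_GLZset σ)) rfl) hk

end Padic

theorem statement10_general (p : ℕ) [Fact p.Prime] (n m : ℕ) :
    GLZset p n * {Matrix.diagonal fun i : Fin n => if (i : ℕ) < m then 1 else (p : ℚ_[p])} *
        GLZset p n =
      ⋃ σ : Equiv.Perm (Fin n),
        UpperUnipZ p n * {σ.permMatrix ℚ_[p]} *
          {Matrix.diagonal fun i : Fin n => if (i : ℕ) < m then 1 else (p : ℚ_[p])} *
          GLZset p n :=
  GLZset_mul_diagonal_mul_GLZset_eq_iUnion (isMinusculeDiag_ite m)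

/-- coset decomposition from the proof of Proposition 6.7, `GL_n`
minuscule case: with `t` the diagonal matrix having `1` in the first `m` positions and
`p` in the remaining ones, `K t K = ⋃_{σ ∈ S_n} U(ℤ_p) P_σ t K`. -/
theorem statement10 (p : ℕ) [Fact p.Prime] (n m : ℕ) (hn : 2 ≤ n)
    (hm1 : 1 ≤ m) (hm2 : m ≤ n - 1) :
    GLZset p n * {Matrix.diagonal fun i : Fin n => if (i : ℕ) < m then 1 else (p : ℚ_[p])} *
        GLZset p n =
      ⋃ σ : Equiv.Perm (Fin n),
        UpperUnipZ p n * {σ.permMatrix ℚ_[p]} *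
          {Matrix.diagonal fun i : Fin n => if (i : ℕ) < m then 1 else (p : ℚ_[p])} *
          GLZset p n :=
  statement10_general p n m
end

section
/- (Final step of the proof of Proposition 9.1.) Let n ≥ 1 and let Π ∈ GL_n(ℚ_p) be the matrix whose (i, i+1)-entry is 1 for 1 ≤ i ≤ n−1, whose (n,1)-entry is p, and whose other entries are 0. Then GL_n(ℚ_p) is generated as a group by GL_n(ℤ_p) together with Π. -/
/-!
After multiplying by a scalar `p ^ N` it suffices to treat integral `g`. If `det g` is not a
unit, `g` is singular modulo `p`, so some primitive integral vector `w` has `g w ≡ 0 mod p`.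
Putting `w` as the `i`-th column of the identity gives `u ∈ GL_n(ℤ_p)`, and dividing the
`i`-th column of `g u` by `p` writes `g = b · diag(1, …, p, …, 1) · u⁻¹` with `b` integral and
`|det b| = p |det g|`; induction on the valuation of `det g` ends in `GL_n(ℤ_p)`. Finally
`Π` is a permutation matrix times `diag(p, 1, …, 1)`, whose conjugates by permutation matrices
are all the `diag(1, …, p, …, 1)`.
-/

open Matrix IsLocalRing

variable {ι : Type*} [Fintype ι] [DecidableEq ι]

theorem IsLocalRing.exists_isUnit_mulVec_mem_maximalIdeal {R : Type*} [CommRing R]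
    [IsLocalRing R] (M : Matrix ι ι R) (hM : M.det ∈ maximalIdeal R) :
    ∃ w : ι → R, (∃ i, IsUnit (w i)) ∧ ∀ i, (M *ᵥ w) i ∈ maximalIdeal R := by
  have hdet : (M.map (residue R)).det = 0 := by
    rwa [← RingHom.mapMatrix_apply, ← RingHom.map_det, residue_eq_zero_iff]
  obtain ⟨v, hv0, hv⟩ := exists_mulVec_eq_zero_iff.mpr hdet
  choose w hw using fun i => residue_surjective (v i)
  have hwv : residue R ∘ w = v := funext hw
  obtain ⟨i, hi⟩ := Function.ne_iff.mp hv0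
  refine ⟨w, ⟨i, (residue_ne_zero_iff_isUnit _).mp (by rwa [hw])⟩, fun j => ?_⟩
  rw [← residue_eq_zero_iff, RingHom.map_mulVec, hwv, hv, Pi.zero_apply]

namespace Matrix

theorem det_updateCol_one {R : Type*} [CommRing R] (i : ι) (w : ι → R) :
    (updateCol 1 i w).det = w i := by
  rw [← cramer_apply, cramer_one, Module.End.one_apply]

theorem permMatrix_mul_diagonal {R : Type*} [CommRing R] (σ : Equiv.Perm ι) (d : ι → R) :
    σ.permMatrix R * diagonal d = diagonal (d ∘ σ) * σ.permMatrix R := by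
  rw [Equiv.Perm.permMatrix, PEquiv.toMatrix_toPEquiv_mul, PEquiv.mul_toMatrix_toPEquiv]
  ext i j
  simp only [submatrix_apply, diagonal_apply, id, Function.comp_apply, Equiv.eq_symm_apply]

theorem updateCol_smul_mulVec_mul_diagonal {K : Type*} [Field K] (A : Matrix ι ι K) (i : ι)
    (w : ι → K) {c : K} (hc : c ≠ 0) :
    updateCol A i (c⁻¹ • (A *ᵥ w)) * diagonal (Pi.mulSingle i c) = A * updateCol 1 i w := by
  rw [mul_updateCol, Matrix.mul_one]
  ext j k
  rcases eq_or_ne k i with rfl | hk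
  · simp [mul_right_comm _ _ c, inv_mul_cancel₀ hc]
  · simp [hk]

namespace GeneralLinearGroup

noncomputable def ofPerm {R : Type*} [CommRing R] (σ : Equiv.Perm ι) : GL ι R :=
  mk'' (σ.permMatrix R) (by simpa using (Equiv.Perm.sign σ).isUnit.map (Int.castRingHom R))

end GeneralLinearGroup

end Matrix

namespace Padic

open GeneralLinearGroup Filter

variable {p : ℕ} [Fact p.Prime]

omit [Fintype ι] [DecidableEq ι] in
theorem exists_map_coe_eq_of_norm_le_one {A : Matrix ι ι ℚ_[p]} (hA : ∀ i j, ‖A i j‖ ≤ 1) :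
    ∃ B : Matrix ι ι ℤ_[p], B.map PadicInt.Coe.ringHom = A :=
  ⟨of fun i j => ⟨A i j, hA i j⟩, rfl⟩

theorem norm_det_map_coe (B : Matrix ι ι ℤ_[p]) :
    ‖(B.map PadicInt.Coe.ringHom).det‖ = ‖B.det‖ := by
  rw [← RingHom.mapMatrix_apply, ← RingHom.map_det]
  rfl

theorem norm_det_le_one_s11 {A : Matrix ι ι ℚ_[p]} (hA : ∀ i j, ‖A i j‖ ≤ 1) : ‖A.det‖ ≤ 1 := by
  obtain ⟨B, rfl⟩ := exists_map_coe_eq_of_norm_le_one hA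
  exact (norm_det_map_coe B).trans_le B.det.norm_le_one

theorem exists_norm_mulVec_le_of_norm_det_lt_one {A : Matrix ι ι ℚ_[p]}
    (hA : ∀ i j, ‖A i j‖ ≤ 1) (hdet : ‖A.det‖ < 1) :
    ∃ w : ι → ℚ_[p], (∀ j, ‖w j‖ ≤ 1) ∧ (∃ i, ‖w i‖ = 1) ∧ ∀ i, ‖(A *ᵥ w) i‖ ≤ (p : ℝ)⁻¹ := by
  obtain ⟨B, rfl⟩ := exists_map_coe_eq_of_norm_le_one hA
  have hBdet : B.det ∈ maximalIdeal ℤ_[p] := by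
    rwa [mem_maximalIdeal, PadicInt.mem_nonunits, ← norm_det_map_coe]
  obtain ⟨w, ⟨i, hi⟩, hBw⟩ := exists_isUnit_mulVec_mem_maximalIdeal B hBdet
  refine ⟨PadicInt.Coe.ringHom ∘ w, fun j => (w j).norm_le_one, ⟨i, PadicInt.isUnit_iff.mp hi⟩,
    fun j => ?_⟩
  have hlt : ‖(B *ᵥ w) j‖ < 1 := PadicInt.mem_nonunits.mp ((mem_maximalIdeal _).mp (hBw j))
  rw [← RingHom.map_mulVec, ← _root_.zpow_neg_one]
  exact (PadicInt.norm_le_pow_iff_norm_lt_pow_add_one _ (-1)).mpr (by simpa using hlt)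

def integralGL (p : ℕ) [Fact p.Prime] (ι : Type*) [Fintype ι] [DecidableEq ι] :
    Set (GL ι ℚ_[p]) :=
  {g | (∀ i j, ‖(g : Matrix ι ι ℚ_[p]) i j‖ ≤ 1) ∧ ‖(g : Matrix ι ι ℚ_[p]).det‖ = 1}

variable (p) in
noncomputable def diagP (i : ι) : GL ι ℚ_[p] :=
  mkOfDetNeZero (diagonal (Pi.mulSingle i (p : ℚ_[p])))
    (by simp [Finset.prod_pi_mulSingle', (Fact.out : p.Prime).ne_zero])

variable {H : Subgroup (GL ι ℚ_[p])}

theorem ofPerm_mem_integralGL (σ : Equiv.Perm ι) : ofPerm σ ∈ integralGL p ι := by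
  refine ⟨fun i j => ?_, ?_⟩
  · simp only [ofPerm, val_mk'', PEquiv.toMatrix_apply]
    split_ifs <;> simp
  · rcases Int.units_eq_one_or (Equiv.Perm.sign σ) with h | h <;>
      simp [ofPerm, h]

theorem ofPerm_mul_diagP (σ : Equiv.Perm ι) (i : ι) :
    ofPerm σ * diagP p i = diagP p (σ.symm i) * ofPerm σ := by
  ext : 1
  simp only [Units.val_mul, ofPerm, diagP, val_mkOfDetNeZero, val_mk'', permMatrix_mul_diagonal,
    Pi.mulSingle_comp_equiv]

theorem diagP_mem_of_mem (hK : integralGL p ι ⊆ H) {i : ι}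
    (hi : diagP p i ∈ H) (j : ι) : diagP p j ∈ H := by
  have hP := hK (ofPerm_mem_integralGL (Equiv.swap i j))
  have hconj : ofPerm (Equiv.swap i j) * diagP p i * (ofPerm (Equiv.swap i j))⁻¹ = diagP p j := by
    rw [mul_inv_eq_iff_eq_mul, ofPerm_mul_diagP, Equiv.symm_swap, Equiv.swap_apply_left]
  exact hconj ▸ H.mul_mem (H.mul_mem hP hi) (H.inv_mem hP)

theorem exists_eq_mul_diagP_mul_inv {g : GL ι ℚ_[p]}
    (hg : ∀ i j, ‖(g : Matrix ι ι ℚ_[p]) i j‖ ≤ 1) (hdet : ‖(g : Matrix ι ι ℚ_[p]).det‖ < 1) :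
    ∃ (b : GL ι ℚ_[p]) (i : ι) (u : GL ι ℚ_[p]), u ∈ integralGL p ι ∧
      (∀ i j, ‖(b : Matrix ι ι ℚ_[p]) i j‖ ≤ 1) ∧
      ‖(b : Matrix ι ι ℚ_[p]).det‖ = p * ‖(g : Matrix ι ι ℚ_[p]).det‖ ∧
      g = b * diagP p i * u⁻¹ := by
  obtain ⟨w, hw, ⟨i, hwi⟩, hgw⟩ := exists_norm_mulVec_le_of_norm_det_lt_one hg hdet
  have hp : (p : ℚ_[p]) ≠ 0 := Nat.cast_ne_zero.mpr (Fact.out : p.Prime).ne_zero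
  have hwi0 : w i ≠ 0 := norm_ne_zero_iff.mp (by rw [hwi]; exact one_ne_zero)
  set B := updateCol (g : Matrix ι ι ℚ_[p]) i ((p : ℚ_[p])⁻¹ • (g *ᵥ w))
  have hB := updateCol_smul_mulVec_mul_diagonal (g : Matrix ι ι ℚ_[p]) i w hp
  have hdetB : B.det * p = (g : Matrix ι ι ℚ_[p]).det * w i := by
    simpa [det_mul, det_updateCol_one, Finset.prod_pi_mulSingle'] using congrArg Matrix.det hB
  have hB0 : B.det ≠ 0 :=
    left_ne_zero_of_mul (hdetB ▸ mul_ne_zero (det_ne_zero g) hwi0)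
  let u := mkOfDetNeZero (updateCol 1 i w) (by rwa [det_updateCol_one])
  refine ⟨mkOfDetNeZero B hB0, i, u, ⟨fun j k => ?_, ?_⟩, fun j k => ?_, ?_, ?_⟩
  · simp only [u, val_mkOfDetNeZero, updateCol_apply, one_apply]
    split_ifs <;> simp [hw]
  · simpa [u, det_updateCol_one] using hwi
  · simp only [val_mkOfDetNeZero, B, updateCol_apply]
    split_ifs
    · rw [Pi.smul_apply, smul_eq_mul, norm_mul, norm_inv, norm_p, inv_inv]
      calc (p : ℝ) * ‖(g *ᵥ w) j‖ ≤ p * (p : ℝ)⁻¹ := by gcongr; exact hgw j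
        _ = 1 := mul_inv_cancel₀ (by exact_mod_cast hp)
    · exact hg j k
  · have := congrArg norm hdetB
    rw [norm_mul, norm_mul, norm_p, hwi, mul_one] at this
    rw [val_mkOfDetNeZero, ← this, mul_comm, inv_mul_cancel_right₀ (by exact_mod_cast hp)]
  · rw [eq_mul_inv_iff_mul_eq]
    ext : 1
    simpa [u, diagP] using hB.symm

theorem mem_of_forall_norm_le_one (hK : integralGL p ι ⊆ H) (hD : ∀ i, diagP p i ∈ H)
    {g : GL ι ℚ_[p]} (hg : ∀ i j, ‖(g : Matrix ι ι ℚ_[p]) i j‖ ≤ 1) : g ∈ H := by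
  suffices key : ∀ k : ℕ, ∀ g : GL ι ℚ_[p], (∀ i j, ‖(g : Matrix ι ι ℚ_[p]) i j‖ ≤ 1) →
      (p : ℝ)⁻¹ ^ k ≤ ‖(g : Matrix ι ι ℚ_[p]).det‖ → g ∈ H by
    have hp : (p : ℝ)⁻¹ < 1 := inv_lt_one_of_one_lt₀ (mod_cast (Fact.out : p.Prime).one_lt)
    obtain ⟨k, hk⟩ := exists_pow_lt_of_lt_one (norm_pos_iff.mpr (det_ne_zero g)) hp
    exact key k g hg hk.le
  intro k
  induction k with
  | zero =>
    intro g hg hdet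
    exact hK ⟨hg, le_antisymm (norm_det_le_one_s11 hg) (by simpa using hdet)⟩
  | succ k ih =>
    intro g hg hdet
    rcases (norm_det_le_one_s11 hg).eq_or_lt with h1 | hlt
    · exact hK ⟨hg, h1⟩
    obtain ⟨b, i, u, hu, hb, hbdet, rfl⟩ := exists_eq_mul_diagP_mul_inv hg hlt
    have hbdet' : (p : ℝ)⁻¹ ^ k ≤ ‖(b : Matrix ι ι ℚ_[p]).det‖ := by
      have hp : (p : ℝ) ≠ 0 := mod_cast (Fact.out : p.Prime).ne_zero
      rw [hbdet, ← inv_mul_le_iff₀ (by positivity), ← pow_succ']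
      exact hdet
    exact H.mul_mem (H.mul_mem (ih b hb hbdet') (hD i)) (H.inv_mem (hK hu))

omit [DecidableEq ι] in
theorem exists_pow_mul_norm_le_one (A : Matrix ι ι ℚ_[p]) :
    ∃ N : ℕ, ∀ i j, ‖(p : ℚ_[p]) ^ N * A i j‖ ≤ 1 := by
  have hp : (1 : ℝ) < p := mod_cast (Fact.out : p.Prime).one_lt
  have h : ∀ i j, ∀ᶠ N in atTop, ‖A i j‖ ≤ (p : ℝ) ^ N := fun i j =>
    (tendsto_pow_atTop_atTop_of_one_lt hp).eventually_ge_atTop _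
  obtain ⟨N, hN⟩ := (eventually_all.2 fun i => eventually_all.2 (h i)).exists
  refine ⟨N, fun i j => ?_⟩
  rw [norm_mul, norm_pow, norm_p, inv_pow]
  exact inv_mul_le_one_of_le₀ (hN i j) (by positivity)

theorem eq_top_of_integralGL_subset (hK : integralGL p ι ⊆ H) (hD : ∀ i, diagP p i ∈ H) :
    H = ⊤ := by
  refine (Subgroup.eq_top_iff' H).mpr fun g => ?_
  obtain ⟨N, hN⟩ := exists_pow_mul_norm_le_one (g : Matrix ι ι ℚ_[p])
  have hp : (p : ℚ_[p]) ≠ 0 := Nat.cast_ne_zero.mpr (Fact.out : p.Prime).ne_zero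
  let s : GL ι ℚ_[p] := scalar ι (Units.mk0 (p : ℚ_[p]) hp ^ N)
  have hs_val : (s : Matrix ι ι ℚ_[p]) = diagonal fun _ => (p : ℚ_[p]) ^ N := by
    simp only [s, coe_scalar, Units.val_pow_eq_pow_val, Units.val_mk0, scalar_apply]
  have hs : s ∈ H := mem_of_forall_norm_le_one hK hD fun i j => by
    rw [hs_val, diagonal_apply]
    split_ifs
    · exact_mod_cast norm_int_le_one (p ^ N)
    · simp
  have hsg : s * g ∈ H := mem_of_forall_norm_le_one hK hD fun i j => by
    rw [Units.val_mul, hs_val, diagonal_mul]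
    exact hN i j
  simpa using H.mul_mem (H.inv_mem hs) hsg

theorem closure_integralGL_union_eq_top {S : Set (GL ι ℚ_[p])} {σ : Equiv.Perm ι} {i : ι}
    (hS : ofPerm σ * diagP p i ∈ S) : Subgroup.closure (integralGL p ι ∪ S) = ⊤ := by
  have hK : integralGL p ι ⊆ Subgroup.closure (integralGL p ι ∪ S) := fun g hg =>
    Subgroup.subset_closure (Or.inl hg)
  have hD : diagP p i ∈ Subgroup.closure (integralGL p ι ∪ S) :=
    (Subgroup.mul_mem_cancel_left _ (hK (ofPerm_mem_integralGL σ))).mp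
      (Subgroup.subset_closure (Or.inr hS))
  exact eq_top_of_integralGL_subset hK (diagP_mem_of_mem hK hD)

theorem val_ofPerm_finRotate_mul_diagP_zero (m : ℕ) :
    ((ofPerm (finRotate (m + 1)) * diagP p 0 : GL (Fin (m + 1)) ℚ_[p]) : Matrix _ _ ℚ_[p]) =
      of fun i j : Fin (m + 1) => if (j : ℕ) = (i : ℕ) + 1 then 1
        else if (i : ℕ) = m + 1 - 1 ∧ (j : ℕ) = 0 then (p : ℚ_[p]) else 0 := by
  ext i j
  simp only [Units.val_mul, ofPerm, diagP, val_mk'', val_mkOfDetNeZero, Equiv.Perm.permMatrix,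
    PEquiv.toMatrix_toPEquiv_mul, submatrix_apply, diagonal_apply, finRotate_apply, of_apply, id,
    Fin.ext_iff, Fin.val_add_one, Pi.mulSingle_apply, Fin.val_zero, Fin.val_last,
    Nat.add_sub_cancel]
  split_ifs <;> first | rfl | (exfalso; omega)

end Padic

/-- final step of the proof of Proposition 9.1: `GL_n(ℚ_p)` is
generated as a group by `GL_n(ℤ_p)` together with the matrix `Π` having `(i, i+1)`-entries
`1` (for `1 ≤ i ≤ n-1`), `(n, 1)`-entry `p`, and all other entries `0`. -/
theorem statement11 (p : ℕ) [Fact p.Prime] (n : ℕ) (hn : 1 ≤ n) :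
    Subgroup.closure
        ({g : Matrix.GeneralLinearGroup (Fin n) ℚ_[p] |
            (∀ i j, ‖(g : Matrix (Fin n) (Fin n) ℚ_[p]) i j‖ ≤ 1) ∧
              ‖(g : Matrix (Fin n) (Fin n) ℚ_[p]).det‖ = 1} ∪
          {g : Matrix.GeneralLinearGroup (Fin n) ℚ_[p] |
            (g : Matrix (Fin n) (Fin n) ℚ_[p]) =
              Matrix.of fun i j : Fin n =>
                if (j : ℕ) = (i : ℕ) + 1 then 1
                else if (i : ℕ) = n - 1 ∧ (j : ℕ) = 0 then (p : ℚ_[p]) else 0}) = ⊤ := by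
  obtain ⟨m, rfl⟩ : ∃ m, n = m + 1 := ⟨n - 1, by omega⟩
  exact Padic.closure_integralGL_union_eq_top (Padic.val_ofPerm_finRotate_mul_diagP_zero m)
end

section
/- (Claim in the proof of Proposition 6.7, for the GL_n coweight lattice.) Let n ≥ 2 and 1 ≤ k ≤ n−1. Let λ ∈ ℤⁿ have entries λ_i = −1 for i ≤ k and λ_i = 0 for i > k, and let α^∨ = e_k − e_{k+1}. Then for every antidominant μ ∈ ℤⁿ (i.e. μ_1 ≤ ⋯ ≤ μ_n): μ ≥ 2λ if and only if μ = 2λ or μ ≥ 2λ + α^∨. -/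
/-- The simple coroot `e_i - e_{i+1}` (0-indexed) of `GL_n`, as a vector in `ℤⁿ`. -/
def simpleCoroot (n i : ℕ) : Fin n → ℤ :=
  fun j => if (j : ℕ) = i then 1 else if (j : ℕ) = i + 1 then -1 else 0

/-- `μ ≥ lam`: `μ - lam` is a nonnegative integer linear combination of the simple
coroots `e_i - e_{i+1}`, `0 ≤ i ≤ n - 2` (0-indexed). -/
def CorootGE {n : ℕ} (μ lam : Fin n → ℤ) : Prop :=
  ∃ c : ℕ → ℕ, ∀ j : Fin n,
    μ j - lam j = ∑ i ∈ Finset.range (n - 1), (c i : ℤ) * simpleCoroot n i j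

/-!
Write `μ - 2λ = ∑ cᵢ αᵢ^∨`. If the coefficient of `α^∨` is positive, lowering it by one shows
`μ ≥ 2λ + α^∨`. If it vanishes, the coordinates `k` and `n` (1-indexed) of `d = μ - 2λ` are
`≤ 0`; since `2λ` is constant on the blocks `[1, k]` and `[k + 1, n]` and `μ` is antidominant,
every coordinate of `d` is then `≤ 0`. But `∑ⱼ dⱼ = 0` because each coroot has coordinate sum
zero, so `d = 0`.
-/

open Finset

def corootComb (n : ℕ) (c : ℕ → ℕ) : Fin n → ℤ :=
  fun j => ∑ i ∈ range (n - 1), (c i : ℤ) * simpleCoroot n i j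

theorem CorootGE.refl {n : ℕ} (μ : Fin n → ℤ) : CorootGE μ μ :=
  ⟨0, fun j => by simp⟩

theorem simpleCoroot_eq {n i : ℕ} (j : Fin n) : simpleCoroot n i j =
    (if (j : ℕ) = i then 1 else 0) - (if (j : ℕ) = i + 1 then 1 else 0) := by
  unfold simpleCoroot; split_ifs <;> omega

theorem corootComb_apply {n : ℕ} (c : ℕ → ℕ) (j : Fin n) :
    corootComb n c j =
      (if (j : ℕ) < n - 1 then (c j : ℤ) else 0) - (if 0 < (j : ℕ) then (c (j - 1) : ℤ) else 0) := by
  simp only [corootComb, simpleCoroot_eq, mul_sub, mul_ite, mul_one, mul_zero, sum_sub_distrib]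
  congr 1
  · simp [sum_ite_eq', eq_comm]
  · rcases Nat.eq_zero_or_eq_succ_pred (j : ℕ) with h | h
    · simp [h]
    · have : (j : ℕ) - 1 < n - 1 := by omega
      rw [h]
      simp [this]

theorem sum_simpleCoroot {n i : ℕ} (hi : i < n - 1) : ∑ j, simpleCoroot n i j = 0 := by
  simp only [simpleCoroot_eq, sum_sub_distrib]
  rw [Fin.sum_univ_eq_sum_range (fun j => if j = i then (1 : ℤ) else 0),
    Fin.sum_univ_eq_sum_range (fun j => if j = i + 1 then (1 : ℤ) else 0)]
  simp only [sum_ite_eq', mem_range]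
  omega

theorem sum_corootComb (n : ℕ) (c : ℕ → ℕ) : ∑ j, corootComb n c j = 0 := by
  simp only [corootComb]
  rw [sum_comm]
  refine sum_eq_zero fun i hi => ?_
  rw [← mul_sum, sum_simpleCoroot (mem_range.1 hi), mul_zero]

theorem corootComb_add_single {n i : ℕ} (hi : i < n - 1) (c : ℕ → ℕ) :
    corootComb n (c + Pi.single i 1) = corootComb n c + simpleCoroot n i := by
  funext j
  simp [corootComb, add_mul, sum_add_distrib, Pi.single_apply, hi]

theorem corootGE_add_simpleCoroot_iff {n i : ℕ} (hi : i < n - 1) {μ lam : Fin n → ℤ} :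
    CorootGE μ (fun j => lam j + simpleCoroot n i j) ↔
      ∃ c : ℕ → ℕ, c i ≠ 0 ∧ ∀ j, μ j - lam j = corootComb n c j := by
  constructor
  · rintro ⟨c, hc⟩
    refine ⟨c + Pi.single i 1, by simp, fun j => ?_⟩
    have := hc j
    dsimp only at this
    rw [corootComb_add_single hi, Pi.add_apply, corootComb]
    linarith
  · rintro ⟨c, hci, hc⟩
    set c' := Function.update c i (c i - 1)
    have hc' : c' + Pi.single i 1 = c := by
      funext x
      by_cases hx : x = i
      · subst hx
        simp only [Pi.add_apply, Function.update_self, Pi.single_eq_same, c']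
        omega
      · simp [c', hx]
    refine ⟨c', fun j => show μ j - (lam j + simpleCoroot n i j) = corootComb n c' j from ?_⟩
    have := hc j
    rw [← hc', corootComb_add_single hi] at this
    simp only [Pi.add_apply] at this
    linarith

theorem eq_of_sub_eq_corootComb {n k : ℕ} (hk : 0 < k) (hkn : k ≤ n) {μ ν : Fin n → ℤ}
    (hμ : Monotone μ) {a b : ℤ} (hν : ∀ j : Fin n, ν j = if (j : ℕ) < k then a else b)
    {c : ℕ → ℕ} (hc : ∀ j, μ j - ν j = corootComb n c j) (hck : c (k - 1) = 0) : μ = ν := by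
  -- At `k - 1` the positive term of `corootComb_apply` is `c (k - 1) = 0`; at `n - 1` there is none.
  have hd_block_end : ∀ m : Fin n, ((m : ℕ) = k - 1 ∨ (m : ℕ) = n - 1) → μ m - ν m ≤ 0 := by
    rintro m (hm | hm) <;> rw [hc, corootComb_apply] <;> split_ifs <;> simp_all
  have hle : ∀ j : Fin n, μ j - ν j ≤ 0 := by
    intro j
    by_cases hj : (j : ℕ) < k
    · have hjm : j ≤ ⟨k - 1, by omega⟩ := Fin.mk_le_mk.2 (by omega)
      have hend := hd_block_end ⟨k - 1, by omega⟩ (.inl rfl)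
      rw [hν, if_pos (show k - 1 < k by omega)] at hend
      rw [hν, if_pos hj]
      linarith [hμ hjm]
    · have hjm : j ≤ ⟨n - 1, by omega⟩ := Fin.mk_le_mk.2 (by omega)
      have hend := hd_block_end ⟨n - 1, by omega⟩ (.inr rfl)
      rw [hν, if_neg (show ¬n - 1 < k by omega)] at hend
      rw [hν, if_neg hj]
      linarith [hμ hjm]
  have hsum : ∑ j, (μ j - ν j) = 0 := by simp only [hc, sum_corootComb]
  funext j
  linarith [(sum_eq_zero_iff_of_nonpos fun j _ => hle j).1 hsum j (mem_univ j)]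

theorem statement12_general (n k : ℕ) (hk1 : 1 ≤ k) (hk2 : k ≤ n - 1)
    (lam : Fin n → ℤ) (hlam : ∀ j : Fin n, lam j = if (j : ℕ) < k then -1 else 0)
    (av : Fin n → ℤ)
    (hav : ∀ j : Fin n, av j = if (j : ℕ) = k - 1 then 1 else if (j : ℕ) = k then -1 else 0)
    (μ : Fin n → ℤ) (hμ : Monotone μ) :
    CorootGE μ (fun j => 2 * lam j) ↔
      μ = (fun j => 2 * lam j) ∨ CorootGE μ (fun j => 2 * lam j + av j) := by
  have hav' : av = simpleCoroot n (k - 1) := by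
    funext j
    rw [hav, simpleCoroot, Nat.sub_add_cancel hk1]
  subst hav'
  rw [corootGE_add_simpleCoroot_iff (by omega)]
  constructor
  · rintro ⟨c, hc⟩
    by_cases hck : c (k - 1) = 0
    · refine .inl (eq_of_sub_eq_corootComb hk1 (by omega) hμ (a := -2) (b := 0) ?_ hc hck)
      intro j
      rw [hlam]
      split_ifs <;> norm_num
    · exact .inr ⟨c, hck, hc⟩
  · rintro (rfl | ⟨c, -, hc⟩)
    · exact CorootGE.refl _
    · exact ⟨c, hc⟩

/-- claim in the proof of Proposition 6.7, for the `GL_n` coweight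
lattice: with `λ` having entries `-1` in the first `k` positions (1-indexed: `i ≤ k`)
and `0` after, and `α^∨ = e_k - e_{k+1}` (1-indexed), for every antidominant `μ`:
`μ ≥ 2λ ↔ μ = 2λ ∨ μ ≥ 2λ + α^∨`. -/
theorem statement12 (n k : ℕ) (hn : 2 ≤ n) (hk1 : 1 ≤ k) (hk2 : k ≤ n - 1)
    (lam : Fin n → ℤ) (hlam : ∀ j : Fin n, lam j = if (j : ℕ) < k then -1 else 0)
    (av : Fin n → ℤ)
    (hav : ∀ j : Fin n, av j = if (j : ℕ) = k - 1 then 1 else if (j : ℕ) = k then -1 else 0)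
    (μ : Fin n → ℤ) (hμ : Monotone μ) :
    CorootGE μ (fun j => 2 * lam j) ↔
      μ = (fun j => 2 * lam j) ∨ CorootGE μ (fun j => 2 * lam j + av j) :=
  statement12_general n k hk1 hk2 lam hlam av hav μ hμ
end

section
/- (Weyl group lemma from the proof of Lemma 2.17, for the symmetric group.) Let b_M : {1,…,n} → {1,…,r} and b_L : {1,…,n} → {1,…,s} be monotone nondecreasing surjections, and let W_M = {τ ∈ S_n : b_M(τ(x)) = b_M(x) for all x} and W_L = {τ ∈ S_n : b_L(τ(x)) = b_L(x) for all x} be the corresponding Young subgroups. Suppose σ ∈ S_n has the property that for all i < j with b_M(i) ≠ b_M(j), either σ(i) < σ(j) or b_L(σ(i)) = b_L(σ(j)) (i.e. σ maps every positive root outside Φ_M⁺ into Φ⁺ ∪ Φ_L⁻). Then σ = σ_L ∘ σ_M for some σ_L ∈ W_L and σ_M ∈ W_M. -/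
/-!
It suffices to find a permutation `π` preserving the `b_M`-blocks with `b_L ∘ π = b_L ∘ σ`;
then `σ = (σ π⁻¹) π` is the required factorisation. Such a `π` exists as soon as every
`b_M`-block contains as many `x` with `b_L (σ x) = c` as with `b_L x = c`.

For a lower set `U` of `b_L`-values, the sets `{x | b_L (σ x) ∈ U}` and `{x | b_L x ∈ U}` have
the same size, and the hypothesis on `σ` makes both closed downwards across `b_M`-blocks. Such
a set consists of some full initial `b_M`-blocks and part of the next one, so how it meets each
block is determined by its size. Taking `U = Iic c` and `U = Iio c` and subtracting gives the
count.
-/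

open Finset

def IsBlockLowerSet {α β : Type*} [LT α] (f : α → β) (D : Finset α) : Prop :=
  ∀ ⦃i j⦄, i < j → f i ≠ f j → j ∈ D → i ∈ D

section BlockLowerSet

variable {α β : Type*} [LinearOrder α] [LinearOrder β] {f : α → β}

lemma IsBlockLowerSet.filter_subset (hf : Monotone f) {D T : Finset α}
    (hT : IsBlockLowerSet f T) {j : α} (hj : j ∈ T) {b : β} (hb : b < f j) :
    D.filter (f · = b) ⊆ T.filter (f · = b) := by
  intro x hx
  rw [mem_filter] at hx ⊢
  rw [← hx.2] at hb
  exact ⟨hT (hf.reflect_lt hb) hb.ne hj, hx.2⟩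

lemma IsBlockLowerSet.card_lt_card_of_card_filter_lt (hf : Monotone f) {S T : Finset α}
    (hS : IsBlockLowerSet f S) (hT : IsBlockLowerSet f T) {b : β}
    (hlt : #(T.filter (f · = b)) < #(S.filter (f · = b))) : #T < #S := by
  obtain ⟨j, hj⟩ := card_pos.mp (Nat.zero_lt_of_lt hlt)
  rw [mem_filter] at hj
  have hle : ∀ b', #(T.filter (f · = b')) ≤ #(S.filter (f · = b')) := by
    intro b'
    rcases lt_trichotomy b' b with hb' | rfl | hb'
    · exact card_le_card (hS.filter_subset hf hj.1 (hj.2 ▸ hb'))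
    · exact hlt.le
    · rcases (T.filter (f · = b')).eq_empty_or_nonempty with hempty | ⟨k, hk⟩
      · simp [hempty]
      rw [mem_filter] at hk
      -- `T` reaching the later block `b'` would make it contain the whole block `b`.
      have := card_le_card (hT.filter_subset hf (D := S) hk.1 (hk.2 ▸ hb'))
      omega
  have hmaps : ∀ x ∈ S ∪ T, f x ∈ (S ∪ T).image f := fun x hx => mem_image_of_mem f hx
  rw [card_eq_sum_card_fiberwise (fun x hx => hmaps x (mem_union_right S hx)),
    card_eq_sum_card_fiberwise (fun x hx => hmaps x (mem_union_left T hx))]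
  exact sum_lt_sum (fun b' _ => hle b') ⟨b, hj.2 ▸ hmaps j (mem_union_left T hj.1), hlt⟩

lemma Monotone.card_filter_eq_of_card_eq (hf : Monotone f) {S T : Finset α}
    (hS : IsBlockLowerSet f S) (hT : IsBlockLowerSet f T) (hcard : #S = #T) (b : β) :
    #(S.filter (f · = b)) = #(T.filter (f · = b)) := by
  rcases lt_trichotomy #(S.filter (f · = b)) #(T.filter (f · = b)) with h | h | h
  · exact absurd hcard (hT.card_lt_card_of_card_filter_lt hf hS h).ne
  · exact h
  · exact absurd hcard (hS.card_lt_card_of_card_filter_lt hf hT h).ne'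

end BlockLowerSet

lemma exists_perm_comp_eq_of_card_filter_eq {α β : Type*} [Fintype α] [DecidableEq β]
    (k j : α → β) (h : ∀ b, #(univ.filter (k · = b)) = #(univ.filter (j · = b))) :
    ∃ π : Equiv.Perm α, ∀ x, j (π x) = k x := by
  have e : ∀ b, {x // k x = b} ≃ {x // j x = b} := fun b =>
    Fintype.equivOfCardEq (by rw [Fintype.card_subtype, Fintype.card_subtype, h b])
  exact ⟨(Equiv.sigmaFiberEquiv k).symm.trans
    ((Equiv.sigmaCongrRight e).trans (Equiv.sigmaFiberEquiv j)), fun x => (e (k x) ⟨x, rfl⟩).2⟩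

section YoungSubgroup

variable {α β γ : Type*} [LinearOrder α] [Fintype α] [LinearOrder γ]
  {bM : α → β} {bL : α → γ} {σ : Equiv.Perm α}

lemma isBlockLowerSet_filter_mem (hbL : Monotone bL) {U : Set γ} [DecidablePred (· ∈ U)]
    (hU : IsLowerSet U) : IsBlockLowerSet bM (univ.filter (bL · ∈ U)) := by
  intro i j hij _ hj
  simp only [mem_filter, mem_univ, true_and] at hj ⊢
  exact hU (hbL hij.le) hj

lemma isBlockLowerSet_filter_comp_mem (hbL : Monotone bL)
    (hσ : ∀ i j, i < j → bM i ≠ bM j → σ i < σ j ∨ bL (σ i) = bL (σ j))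
    {U : Set γ} [DecidablePred (· ∈ U)] (hU : IsLowerSet U) :
    IsBlockLowerSet bM (univ.filter (fun x => bL (σ x) ∈ U)) := by
  intro i j hij hb hj
  simp only [mem_filter, mem_univ, true_and] at hj ⊢
  rcases hσ i j hij hb with h | h
  · exact hU (hbL h.le) hj
  · exact h ▸ hj

variable [LinearOrder β]

lemma card_filter_comp_perm_eq (hbM : Monotone bM) (hbL : Monotone bL)
    (hσ : ∀ i j, i < j → bM i ≠ bM j → σ i < σ j ∨ bL (σ i) = bL (σ j)) (a : β) (c : γ) :
    #(univ.filter (fun x => bM x = a ∧ bL (σ x) = c)) =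
      #(univ.filter (fun x => bM x = a ∧ bL x = c)) := by
  have lower : ∀ (U : Set γ) [DecidablePred (· ∈ U)], IsLowerSet U →
      #((univ.filter (fun x => bL (σ x) ∈ U)).filter (bM · = a)) =
        #((univ.filter (bL · ∈ U)).filter (bM · = a)) := fun U _ hU =>
    hbM.card_filter_eq_of_card_eq (isBlockLowerSet_filter_comp_mem hbL hσ hU)
      (isBlockLowerSet_filter_mem hbL hU) (card_equiv σ (by simp)) a
  have split : ∀ g : α → γ, #((univ.filter (g · ∈ Set.Iic c)).filter (bM · = a)) =
      #((univ.filter (g · ∈ Set.Iio c)).filter (bM · = a)) +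
        #(univ.filter (fun x => bM x = a ∧ g x = c)) := by
    intro g
    rw [← card_filter_add_card_filter_not (p := fun x => g x < c), filter_filter, filter_filter,
      filter_filter]
    congr 2 <;> ext x <;> simp only [mem_filter, mem_univ, true_and, Set.mem_Iic, Set.mem_Iio]
    · exact ⟨fun h => ⟨h.2.2, h.2.1⟩, fun h => ⟨h.1.le, h.2, h.1⟩⟩
    · rw [not_lt, le_antisymm_iff (a := g x)]
      tauto
  have := lower _ (isLowerSet_Iic c)
  have := lower _ (isLowerSet_Iio c)
  have := split (bL ∘ σ)
  have := split bL
  simp only [Function.comp_apply] at *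
  omega

lemma exists_perm_blockwise_comp_eq (hbM : Monotone bM) (hbL : Monotone bL)
    (hσ : ∀ i j, i < j → bM i ≠ bM j → σ i < σ j ∨ bL (σ i) = bL (σ j)) :
    ∃ π : Equiv.Perm α, (∀ x, bM (π x) = bM x) ∧ ∀ x, bL (π x) = bL (σ x) := by
  obtain ⟨π, hπ⟩ := exists_perm_comp_eq_of_card_filter_eq (fun x => (bM x, bL (σ x)))
    (fun x => (bM x, bL x)) fun ⟨a, c⟩ => by
      simpa only [Prod.mk.injEq] using card_filter_comp_perm_eq hbM hbL hσ a c
  exact ⟨π, fun x => (Prod.ext_iff.mp (hπ x)).1, fun x => (Prod.ext_iff.mp (hπ x)).2⟩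

end YoungSubgroup

theorem statement14_general (n r s : ℕ)
    (bM : Fin n → Fin r) (hbM : Monotone bM)
    (bL : Fin n → Fin s) (hbL : Monotone bL)
    (σ : Equiv.Perm (Fin n))
    (hσ : ∀ i j : Fin n, i < j → bM i ≠ bM j → σ i < σ j ∨ bL (σ i) = bL (σ j)) :
    ∃ σL σM : Equiv.Perm (Fin n),
      (∀ x, bL (σL x) = bL x) ∧ (∀ x, bM (σM x) = bM x) ∧ σ = σL * σM := by
  obtain ⟨π, hπM, hπL⟩ := exists_perm_blockwise_comp_eq hbM hbL hσ
  refine ⟨σ * π⁻¹, π, fun x => ?_, hπM, by group⟩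
  simpa using (hπL (π⁻¹ x)).symm

/-- Weyl group lemma from the proof of Lemma 2.17, for the symmetric
group: if `σ ∈ S_n` maps every positive root outside `Φ_M⁺` into `Φ⁺ ∪ Φ_L⁻` (i.e. for
all `i < j` in different `b_M`-blocks, either `σ i < σ j` or `σ i, σ j` are in the same
`b_L`-block), then `σ = σ_L ∘ σ_M` with `σ_L ∈ W_L` and `σ_M ∈ W_M`. -/
theorem statement14 (n r s : ℕ)
    (bM : Fin n → Fin r) (hbM : Monotone bM) (hbMs : Function.Surjective bM)
    (bL : Fin n → Fin s) (hbL : Monotone bL) (hbLs : Function.Surjective bL)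
    (σ : Equiv.Perm (Fin n))
    (hσ : ∀ i j : Fin n, i < j → bM i ≠ bM j → σ i < σ j ∨ bL (σ i) = bL (σ j)) :
    ∃ σL σM : Equiv.Perm (Fin n),
      (∀ x, bL (σL x) = bL x) ∧ (∀ x, bM (σM x) = bM x) ∧ σ = σL * σM :=
  statement14_general n r s bM hbM bL hbL σ hσ
end

section
/- (Combinatorial core of Lemma 2.5 for GL_n: the bijection between M-regular weights of G and weights of M.) Let q ≥ 2 be an integer, n ≥ 1, and Δ_M ⊆ {1,…,n−1}. Suppose ν ∈ ℤⁿ satisfies 0 ≤ ν_i − ν_{i+1} ≤ q−1 for all i ∈ Δ_M. Then there exists ν' ∈ ℤⁿ such that: (a) 0 ≤ ν'_i − ν'_{i+1} ≤ q−1 for all i ∈ Δ_M; (b) 1 ≤ ν'_i − ν'_{i+1} ≤ q−1 for all i ∈ {1,…,n−1} ∖ Δ_M; (c) ν − ν' = (q−1)·w for some w ∈ ℤⁿ with w_i = w_{i+1} for all i ∈ Δ_M. Moreover, ν' is unique up to adding an integer multiple of (q−1)·(1,1,…,1). -/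
/-- combinatorial core of Lemma 2.5 for `GL_n`: bijection between
`M`-regular weights of `G` and weights of `M`. Simple roots are 0-indexed: the pair
`(ν_j, ν_{j+1})` for `0 ≤ j ≤ n-2` corresponds to the 1-indexed simple root `j+1`. -/
theorem statement15 (q n : ℕ) (hq : 2 ≤ q) (hn : 1 ≤ n)
    (ΔM : Finset ℕ) (hΔ : ΔM ⊆ Finset.range (n - 1))
    (ν : Fin n → ℤ)
    (hν : ∀ j j' : Fin n, (j : ℕ) ∈ ΔM → (j' : ℕ) = (j : ℕ) + 1 →
      0 ≤ ν j - ν j' ∧ ν j - ν j' ≤ (q : ℤ) - 1) :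
    ∃ ν' : Fin n → ℤ,
      (∀ j j' : Fin n, (j : ℕ) ∈ ΔM → (j' : ℕ) = (j : ℕ) + 1 →
        0 ≤ ν' j - ν' j' ∧ ν' j - ν' j' ≤ (q : ℤ) - 1) ∧
      (∀ j j' : Fin n, (j : ℕ) < n - 1 → (j : ℕ) ∉ ΔM → (j' : ℕ) = (j : ℕ) + 1 →
        1 ≤ ν' j - ν' j' ∧ ν' j - ν' j' ≤ (q : ℤ) - 1) ∧
      (∃ w : Fin n → ℤ,
        (∀ j j' : Fin n, (j : ℕ) ∈ ΔM → (j' : ℕ) = (j : ℕ) + 1 → w j = w j') ∧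
        ∀ j, ν j - ν' j = ((q : ℤ) - 1) * w j) ∧
      ∀ ν'' : Fin n → ℤ,
        (∀ j j' : Fin n, (j : ℕ) ∈ ΔM → (j' : ℕ) = (j : ℕ) + 1 →
          0 ≤ ν'' j - ν'' j' ∧ ν'' j - ν'' j' ≤ (q : ℤ) - 1) →
        (∀ j j' : Fin n, (j : ℕ) < n - 1 → (j : ℕ) ∉ ΔM → (j' : ℕ) = (j : ℕ) + 1 →
          1 ≤ ν'' j - ν'' j' ∧ ν'' j - ν'' j' ≤ (q : ℤ) - 1) →
        (∃ w : Fin n → ℤ,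
          (∀ j j' : Fin n, (j : ℕ) ∈ ΔM → (j' : ℕ) = (j : ℕ) + 1 → w j = w j') ∧
          ∀ j, ν j - ν'' j = ((q : ℤ) - 1) * w j) →
        ∃ a : ℤ, ∀ j, ν'' j = ν' j + a * ((q : ℤ) - 1) := by
  obtain ⟨m, rfl⟩ : ∃ m, n = m + 1 := ⟨n - 1, by omega⟩
  simp only [Nat.add_sub_cancel] at hΔ ⊢
  set Q : ℤ := (q : ℤ) - 1 with hQdef
  have hQ : 0 < Q := by simp only [hQdef]; omega
  -- extend ν to ℕ
  set N : ℕ → ℤ := fun i => ν ⟨min i m, by omega⟩ with hN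
  have hNν : ∀ j : Fin (m + 1), N (j : ℕ) = ν j := by
    intro j
    have : min (j : ℕ) m = (j : ℕ) := by omega
    simp [hN, this]
  set d : ℕ → ℤ := fun i => N i - N (i + 1) with hd
  set d' : ℕ → ℤ := fun i => if i ∈ ΔM then d i else (d i - 1) % Q + 1 with hd'
  set e : ℕ → ℤ := fun i => if i ∈ ΔM then 0 else (d i - 1) / Q with he
  have hde : ∀ i, d i - d' i = Q * e i := by
    intro i
    by_cases h : i ∈ ΔM
    · simp [hd', he, h]
    · simp only [hd', he, h, if_neg, ite_false]
      have := Int.mul_ediv_add_emod (d i - 1) Q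
      linarith
  -- ν' and w
  set ν' : Fin (m + 1) → ℤ := fun j => N m + ∑ i ∈ Finset.Ico (j : ℕ) m, d' i with hν'
  set w : Fin (m + 1) → ℤ := fun j => ∑ i ∈ Finset.Ico (j : ℕ) m, e i with hw
  have hsucc : ∀ (f : ℕ → ℤ) (j j' : Fin (m + 1)), (j' : ℕ) = (j : ℕ) + 1 →
      (j : ℕ) < m → (∑ i ∈ Finset.Ico (j : ℕ) m, f i) - (∑ i ∈ Finset.Ico (j' : ℕ) m, f i)
        = f (j : ℕ) := by
    intro f j j' hjj' hjm
    rw [Finset.sum_eq_sum_Ico_succ_bot hjm f, hjj']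
    ring
  have hν'diff : ∀ j j' : Fin (m + 1), (j' : ℕ) = (j : ℕ) + 1 → (j : ℕ) < m →
      ν' j - ν' j' = d' (j : ℕ) := by
    intro j j' hjj' hjm
    have := hsucc d' j j' hjj' hjm
    simp only [hν']
    linarith
  have hwdiff : ∀ j j' : Fin (m + 1), (j' : ℕ) = (j : ℕ) + 1 → (j : ℕ) < m →
      w j - w j' = e (j : ℕ) := fun j j' hjj' hjm => hsucc e j j' hjj' hjm
  -- bounds on d'
  have hdM : ∀ i, i ∈ ΔM → 0 ≤ d i ∧ d i ≤ Q := by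
    intro i hi
    have him : i < m := by have := hΔ hi; simpa using this
    have := hν ⟨i, by omega⟩ ⟨i + 1, by omega⟩ hi rfl
    have h1 : N i = ν ⟨i, by omega⟩ := hNν ⟨i, by omega⟩
    have h2 : N (i + 1) = ν ⟨i + 1, by omega⟩ := hNν ⟨i + 1, by omega⟩
    constructor
    · simp only [hd]; rw [h1, h2]; exact this.1
    · simp only [hd]; rw [h1, h2]; exact this.2
  have hd'M : ∀ i, i ∈ ΔM → d' i = d i := fun i hi => by simp [hd', hi]
  have hd'nM : ∀ i, i ∉ ΔM → 1 ≤ d' i ∧ d' i ≤ Q := by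
    intro i hi
    have h1 : 0 ≤ (d i - 1) % Q := Int.emod_nonneg _ (by omega)
    have h2 : (d i - 1) % Q < Q := Int.emod_lt_of_pos _ hQ
    simp only [hd', hi, ite_false]
    omega
  -- telescoping: ν j - ν' j = Q * w j
  have htel : ∀ j : Fin (m + 1), ∑ i ∈ Finset.Ico (j : ℕ) m, d i = N (j : ℕ) - N m := by
    intro j
    rw [Finset.sum_Ico_eq_sum_range]
    have : ∀ i ∈ Finset.range (m - (j : ℕ)), d ((j : ℕ) + i)
        = (fun i => N ((j : ℕ) + i)) i - (fun i => N ((j : ℕ) + i)) (i + 1) := by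
      intro i _; simp [hd, Nat.add_assoc]
    rw [Finset.sum_congr rfl this, Finset.sum_range_sub']
    have hjm : (j : ℕ) ≤ m := by omega
    simp [Nat.add_sub_cancel' hjm]
  have hkey : ∀ j : Fin (m + 1), ν j - ν' j = Q * w j := by
    intro j
    have h1 : ν j - ν' j = ∑ i ∈ Finset.Ico (j : ℕ) m, (d i - d' i) := by
      rw [Finset.sum_sub_distrib, htel j, hNν j]
      simp only [hν']
      ring
    rw [h1]
    simp only [hw, Finset.mul_sum]
    exact Finset.sum_congr rfl fun i _ => hde i
  have hwM : ∀ j j' : Fin (m + 1), (j : ℕ) ∈ ΔM → (j' : ℕ) = (j : ℕ) + 1 → w j = w j' := by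
    intro j j' hj hjj'
    have hjm : (j : ℕ) < m := by have := hΔ hj; simpa using this
    have := hwdiff j j' hjj' hjm
    have he0 : e (j : ℕ) = 0 := by simp [he, hj]
    omega
  refine ⟨ν', ?_, ?_, ⟨w, hwM, hkey⟩, ?_⟩
  · intro j j' hj hjj'
    have hjm : (j : ℕ) < m := by have := hΔ hj; simpa using this
    rw [hν'diff j j' hjj' hjm, hd'M _ hj]
    exact hdM _ hj
  · intro j j' hjm hj hjj'
    rw [hν'diff j j' hjj' hjm]
    exact hd'nM _ hj
  · -- uniqueness
    rintro ν'' hA hB ⟨w'', hw''M, hw''⟩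
    set δ : Fin (m + 1) → ℤ := fun j => w j - w'' j with hδ
    have hstep : ∀ j j' : Fin (m + 1), (j' : ℕ) = (j : ℕ) + 1 → (j : ℕ) < m →
        δ j = δ j' := by
      intro j j' hjj' hjm
      by_cases hj : (j : ℕ) ∈ ΔM
      · have h1 := hwM j j' hj hjj'
        have h2 := hw''M j j' hj hjj'
        simp only [hδ]; omega
      · -- both diffs in [1, Q]
        have h1 := hν'diff j j' hjj' hjm
        have h1' := hd'nM _ hj
        have h2 := hB j j' hjm hj hjj'
        -- Q*(w j - w j') = (ν j - ν j') - (ν' j - ν' j')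
        have e1 : Q * (w j - w j') = (ν j - ν j') - (ν' j - ν' j') := by
          have a1 := hkey j; have a2 := hkey j'
          ring_nf
          ring_nf at a1 a2
          linarith
        have e2 : Q * (w'' j - w'' j') = (ν j - ν j') - (ν'' j - ν'' j') := by
          have a1 := hw'' j; have a2 := hw'' j'
          ring_nf
          ring_nf at a1 a2
          linarith
        have e3 : Q * (δ j - δ j') = (ν'' j - ν'' j') - (ν' j - ν' j') := by
          simp only [hδ]
          have : Q * ((w j - w'' j) - (w j' - w'' j')) =
              Q * (w j - w j') - Q * (w'' j - w'' j') := by ring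
          rw [this, e1, e2]; ring
        have hb1 : -(Q - 1) ≤ Q * (δ j - δ j') := by rw [e3]; omega
        have hb2 : Q * (δ j - δ j') ≤ Q - 1 := by rw [e3]; omega
        have : δ j - δ j' = 0 := by
          rcases lt_trichotomy (δ j - δ j') 0 with h | h | h
          · nlinarith
          · exact h
          · nlinarith
        omega
    have hconst : ∀ j : Fin (m + 1), δ j = δ ⟨m, by omega⟩ := by
      have aux : ∀ k, k ≤ m → δ ⟨m - k, by omega⟩ = δ ⟨m, by omega⟩ := by
        intro k
        induction k with
        | zero => intro _; simp
        | succ k ih =>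
          intro hk
          have h1 : δ ⟨m - (k + 1), by omega⟩ = δ ⟨m - k, by omega⟩ := by
            apply hstep ⟨m - (k + 1), by omega⟩ ⟨m - k, by omega⟩ <;> simp <;> omega
          rw [h1, ih (by omega)]
      intro j
      have : δ j = δ ⟨m - (m - (j : ℕ)), by omega⟩ := by
        congr 1
        apply Fin.ext
        simp
        omega
      rw [this, aux (m - (j : ℕ)) (by omega)]
    refine ⟨δ ⟨m, by omega⟩, ?_⟩
    intro j
    have h1 := hkey j
    have h2 := hw'' j
    have h3 := hconst j
    have : ν'' j - ν' j = Q * δ j := by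
      have hm : Q * δ j = Q * w j - Q * w'' j := by simp only [hδ]; ring
      rw [hm, ← h1, ← h2]; ring
    rw [h3] at this
    linarith
end

section
/- (Sublemma 9.3.) Let M be a monoid and let (s_a)_{a ∈ ℤ} be elements of M satisfying s_a s_b = s_b s_a whenever |a − b| ≥ 2, and s_a s_{a+1} s_a = s_{a+1} s_a s_{a+1} for all a. Write s_{i…j} := s_i s_{i+1} ⋯ s_j for i ≤ j, with s_{i…j} = 1 if j < i. Then for all integers i ≤ k ≤ ℓ ≤ j: s_{i…j} · s_{k…(ℓ−1)} = s_{(k+1)…ℓ} · s_{i…j}. -/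
/-!
Conjugation by `s_{i…j}` shifts indices: `s_{i…j} s_a = s_{a+1} s_{i…j}` whenever `i ≤ a < j`.
Indeed, writing `s_{i…j} = s_{i…(a-1)} (s_a s_{a+1}) s_{(a+2)…j}`, the letter `s_a` commutes
leftwards past `s_{(a+2)…j}`, the braid relation turns `s_a s_{a+1} s_a` into
`s_{a+1} s_a s_{a+1}`, and `s_{a+1}` commutes leftwards past `s_{i…(a-1)}`.
Moving the letters of `s_{k…(ℓ-1)}` through `s_{i…j}` one at a time gives the theorem.
-/

/-- The ordered product `s_{i…j} = s_i s_{i+1} ⋯ s_j`, equal to `1` if `j < i`. -/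
def sProd {M : Type*} [Monoid M] (s : ℤ → M) (i j : ℤ) : M :=
  ((List.range (j - i + 1).toNat).map fun m => s (i + m)).prod

section

variable {M : Type*} [Monoid M] (s : ℤ → M)

-- `sProd` elaborates its index list as `List.range n : List ℕ` pushed into `List ℤ` by a monadic
-- bind; this is the same product indexed directly by `ℕ`.
lemma sProd_eq_prod_map_range (i j : ℤ) :
    sProd s i j = ((List.range (j - i + 1).toNat).map fun m : ℕ => s (i + m)).prod := by
  rw [sProd, List.bind_eq_flatMap, ← Function.comp_def pure, List.flatMap_pure_eq_map,
    List.map_map]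
  rfl

lemma sProd_of_lt {i j : ℤ} (h : j < i) : sProd s i j = 1 := by
  simp [sProd_eq_prod_map_range, show (j - i + 1).toNat = 0 by omega]

lemma sProd_add_one {i j : ℤ} (h : i ≤ j + 1) :
    sProd s i (j + 1) = sProd s i j * s (j + 1) := by
  have hlen : (j + 1 - i + 1).toNat = (j - i + 1).toNat + 1 := by omega
  rw [sProd_eq_prod_map_range, sProd_eq_prod_map_range, hlen, List.range_succ, List.map_append,
    List.prod_append, List.map_singleton, List.prod_singleton]
  congr 2
  omega

lemma sProd_self (a : ℤ) : sProd s a a = s a := by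
  simpa [sProd_of_lt s (sub_one_lt a)] using sProd_add_one s (show a ≤ a - 1 + 1 by omega)

lemma sProd_eq_mul {i m j : ℤ} (him : i - 1 ≤ m) (hmj : m ≤ j) :
    sProd s i j = sProd s i m * sProd s (m + 1) j := by
  induction j, hmj using Int.leInduction with
  | base => rw [sProd_of_lt s (lt_add_one m), mul_one]
  | succ j hj ih => rw [sProd_add_one s (by omega), sProd_add_one s (by omega), ih, mul_assoc]

lemma commute_sProd (hcomm : ∀ a b : ℤ, 2 ≤ |a - b| → s a * s b = s b * s a) {b i j : ℤ}
    (hb : ∀ m, i ≤ m → m ≤ j → 2 ≤ |b - m|) : Commute (s b) (sProd s i j) := by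
  rw [sProd_eq_prod_map_range]
  refine Commute.list_prod_right _ _ fun y hy => ?_
  obtain ⟨n, hn, rfl⟩ := List.mem_map.mp hy
  rw [List.mem_range] at hn
  exact hcomm _ _ (hb _ (by omega) (by omega))

lemma sProd_mul_s_eq_s_add_one_mul (hcomm : ∀ a b : ℤ, 2 ≤ |a - b| → s a * s b = s b * s a)
    (hbraid : ∀ a : ℤ, s a * s (a + 1) * s a = s (a + 1) * s a * s (a + 1))
    {i j a : ℤ} (hia : i ≤ a) (haj : a < j) :
    sProd s i j * s a = s (a + 1) * sProd s i j := by
  set P := sProd s i (a - 1)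
  set Q := sProd s (a + 2) j
  have hsplit : sProd s i j = P * (s a * s (a + 1)) * Q := by
    rw [sProd_eq_mul s (show i - 1 ≤ a - 1 by omega) (by omega), sub_add_cancel,
      sProd_eq_mul s (show a - 1 ≤ a + 1 by omega) haj, sProd_add_one s (show a ≤ a + 1 by omega),
      sProd_self, show a + 1 + 1 = a + 2 by ring, ← mul_assoc]
  have hQ : Commute (s a) Q := commute_sProd s hcomm fun m _ _ => by rw [le_abs]; omega
  have hP : Commute (s (a + 1)) P := commute_sProd s hcomm fun m _ _ => by rw [le_abs]; omega
  calc sProd s i j * s a = P * (s a * s (a + 1) * s a) * Q := by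
        rw [hsplit, mul_assoc _ Q, ← hQ.eq]; simp only [mul_assoc]
    _ = P * (s (a + 1) * s a * s (a + 1)) * Q := by rw [hbraid]
    _ = s (a + 1) * sProd s i j := by
        rw [hsplit]; simp only [← mul_assoc, ← hP.eq]

end

/-- Sublemma 9.3: if the `s_a` satisfy the commutation relations
`s_a s_b = s_b s_a` for `|a - b| ≥ 2` and the braid relations, then for
`i ≤ k ≤ ℓ ≤ j`: `s_{i…j} · s_{k…(ℓ-1)} = s_{(k+1)…ℓ} · s_{i…j}`. -/
theorem statement16 {M : Type*} [Monoid M] (s : ℤ → M)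
    (hcomm : ∀ a b : ℤ, 2 ≤ |a - b| → s a * s b = s b * s a)
    (hbraid : ∀ a : ℤ, s a * s (a + 1) * s a = s (a + 1) * s a * s (a + 1))
    (i k l j : ℤ) (h1 : i ≤ k) (h2 : k ≤ l) (h3 : l ≤ j) :
    sProd s i j * sProd s k (l - 1) = sProd s (k + 1) l * sProd s i j := by
  induction l, h2 using Int.leInduction with
  | base => rw [sProd_of_lt s (sub_one_lt k), sProd_of_lt s (lt_add_one k), mul_one, one_mul]
  | succ l hkl ih =>
    rw [add_sub_cancel_right, ← sub_add_cancel l 1, sProd_add_one s (by omega), sub_add_cancel,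
      ← mul_assoc, ih (by omega), mul_assoc, sProd_mul_s_eq_s_add_one_mul s hcomm hbraid (by omega) (by omega),
      ← mul_assoc, ← sProd_add_one s (by omega)]
end

section
/- (Identity underlying Sublemma 9.4.) Let n ≥ 2, let M be a monoid, and let s_1, …, s_{n−1}, π ∈ M satisfy s_k·π = π·s_{k+1} for all 1 ≤ k ≤ n−2, and πⁿ = 1. Then s_{n−1}·π² = π²·s_1. -/
/-- identity underlying Sublemma 9.4: in a monoid, if
`s_k π = π s_{k+1}` for `1 ≤ k ≤ n-2` and `πⁿ = 1`, then `s_{n-1} π² = π² s_1`. -/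
theorem statement17 {M : Type*} [Monoid M] (n : ℕ) (hn : 2 ≤ n)
    (s : ℕ → M) (π : M)
    (hrel : ∀ k : ℕ, 1 ≤ k → k ≤ n - 2 → s k * π = π * s (k + 1))
    (hπ : π ^ n = 1) :
    s (n - 1) * π ^ 2 = π ^ 2 * s 1 := by
  have key : ∀ j : ℕ, j ≤ n - 2 → s 1 * π ^ j = π ^ j * s (1 + j) := by
    intro j
    induction j with
    | zero => simp
    | succ j ih =>
      intro hj
      have hj' : j ≤ n - 2 := Nat.le_of_succ_le hj
      have h1 : 1 + j ≤ n - 2 := by omega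
      calc s 1 * π ^ (j + 1) = (s 1 * π ^ j) * π := by rw [pow_succ, mul_assoc]
        _ = π ^ j * (s (1 + j) * π) := by rw [ih hj', mul_assoc]
        _ = π ^ j * (π * s (1 + j + 1)) := by rw [hrel (1 + j) (by omega) h1]
        _ = π ^ (j + 1) * s (1 + (j + 1)) := by
            rw [pow_succ, mul_assoc]; ring_nf
  have hk := key (n - 2) le_rfl
  have hnm : 1 + (n - 2) = n - 1 := by omega
  rw [hnm] at hk
  have hsum : π ^ (n - 2) * π ^ 2 = 1 := by
    rw [← pow_add]
    have : n - 2 + 2 = n := by omega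
    rw [this, hπ]
  have hsum' : π ^ 2 * π ^ (n - 2) = 1 := by
    rw [← pow_add]
    have : 2 + (n - 2) = n := by omega
    rw [this, hπ]
  have h1 : π ^ (n - 2) * (s (n - 1) * π ^ 2) = s 1 := by
    rw [← mul_assoc, ← hk, mul_assoc, hsum, mul_one]
  have h2 : π ^ (n - 2) * (π ^ 2 * s 1) = s 1 := by
    rw [← mul_assoc, hsum, one_mul]
  calc s (n - 1) * π ^ 2
      = π ^ 2 * (π ^ (n - 2) * (s (n - 1) * π ^ 2)) := by
        rw [← mul_assoc, hsum', one_mul]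
    _ = π ^ 2 * (π ^ (n - 2) * (π ^ 2 * s 1)) := by rw [h1, h2]
    _ = π ^ 2 * s 1 := by rw [← mul_assoc, hsum', one_mul]
end

section
/- (Algebraic core of Steps 2–(n+2) of the proof of Proposition 9.1.) Let n ≥ 2, let V be an abelian group, and let S_1, …, S_{n−1}, Π be additive endomorphisms of V satisfying: S_i ∘ S_i = −S_i for all i; S_i ∘ S_j = S_j ∘ S_i whenever |i − j| ≥ 2; S_i ∘ S_{i+1} ∘ S_i = S_{i+1} ∘ S_i ∘ S_{i+1} for 1 ≤ i ≤ n−2; S_k ∘ Π = Π ∘ S_{k+1} for 1 ≤ k ≤ n−2; and Πⁿ = id_V. Suppose v ∈ V satisfies: S_i(v) = 0 for all 1 ≤ i ≤ n−1; v = Π(v) + Σ_{i=1}^{n−1} (S_i ∘ S_{i+1} ∘ ⋯ ∘ S_{n−1} ∘ Π)(v); and for each 1 ≤ i ≤ n−1 there exists N ≥ 1 with (S_i ∘ ⋯ ∘ S_{n−1} ∘ Π)^N(v) = 0. Then (S_i ∘ ⋯ ∘ S_{n−1} ∘ Π)(v) = 0 for every 1 ≤ i ≤ n−1, and Π(v)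 = v. -/
namespace Statement18Aux

variable {V : Type*} [AddCommGroup V]

/-- `Pp S a len = S a * S (a+1) * ⋯ * S (a+len-1)`. -/
def Pp (S : ℕ → AddMonoid.End V) : ℕ → ℕ → AddMonoid.End V
  | _, 0 => 1
  | a, (len+1) => S a * Pp S (a+1) len

lemma Pp_eq_list (S : ℕ → AddMonoid.End V) :
    ∀ (len a : ℕ), ((List.range len).map fun m => S (a + m)).prod = Pp S a len
  | 0, a => by simp [Pp]
  | (len+1), a => by
      rw [List.range_succ_eq_map, List.map_cons, List.prod_cons, List.map_map]
      have h : ((fun m => S (a + m)) ∘ Nat.succ) = fun m => S ((a+1) + m) := by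
        funext m
        simp only [Function.comp_apply]
        congr 1
        omega
      rw [h, Pp_eq_list S len (a+1)]
      simp [Pp]

/-- `qq S i d = (S (i+1) S i)(S (i+2) S (i+1)) ⋯ (S (i+d) S (i+d-1))`. -/
def qq (S : ℕ → AddMonoid.End V) : ℕ → ℕ → AddMonoid.End V
  | _, 0 => 1
  | i, (d+1) => S (i+1) * S i * qq S (i+1) d

end Statement18Aux

open Statement18Aux

/-- The additive endomorphism `T_i = S_i ∘ S_{i+1} ∘ ⋯ ∘ S_{n-1} ∘ Π`. -/
def TT {V : Type*} [AddCommGroup V] (n : ℕ) (S : ℕ → AddMonoid.End V)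
    (Pi : AddMonoid.End V) (i : ℕ) : AddMonoid.End V :=
  ((List.range (n - i)).map fun m => S (i + m)).prod * Pi

/-- algebraic core of Steps 2–(n+2) of the proof of Proposition 9.1:
given additive endomorphisms `S_1, …, S_{n-1}, Π` of an abelian group `V` satisfying the
quadratic, commutation and braid relations, `S_k Π = Π S_{k+1}` and `Πⁿ = 1`, and a
vector `v` killed by all `S_i`, satisfying `v = Π v + Σ_{i=1}^{n-1} T_i v` where
`T_i = S_i ⋯ S_{n-1} Π`, and on which each `T_i` acts nilpotently, we have `T_i v = 0`
for all `i` and `Π v = v`. -/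
theorem statement18 {V : Type*} [AddCommGroup V] (n : ℕ) (hn : 2 ≤ n)
    (S : ℕ → AddMonoid.End V) (Pi : AddMonoid.End V)
    (hsq : ∀ i, 1 ≤ i → i ≤ n - 1 → S i * S i = -(S i))
    (hcomm : ∀ i j, 1 ≤ i → i ≤ n - 1 → 1 ≤ j → j ≤ n - 1 → 2 ≤ |(i : ℤ) - (j : ℤ)| →
      S i * S j = S j * S i)
    (hbraid : ∀ i, 1 ≤ i → i ≤ n - 2 → S i * S (i + 1) * S i = S (i + 1) * S i * S (i + 1))
    (hPiS : ∀ k, 1 ≤ k → k ≤ n - 2 → S k * Pi = Pi * S (k + 1))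
    (hPin : Pi ^ n = 1)
    (v : V)
    (hSv : ∀ i, 1 ≤ i → i ≤ n - 1 → S i v = 0)
    (hv : v = Pi v + ∑ i ∈ Finset.Icc 1 (n - 1), TT n S Pi i v)
    (hnil : ∀ i, 1 ≤ i → i ≤ n - 1 → ∃ N : ℕ, 1 ≤ N ∧ (TT n S Pi i ^ N) v = 0) :
    (∀ i, 1 ≤ i → i ≤ n - 1 → TT n S Pi i v = 0) ∧ Pi v = v := by
  have happ : ∀ (f g : AddMonoid.End V) (x : V), (f * g) x = f (g x) := fun _ _ _ => rfl
  have hTT : ∀ i, TT n S Pi i = Pp S i (n - i) * Pi := by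
    intro i; unfold TT; rw [Pp_eq_list]
  set w : V := Pi (Pi v) with hwdef
  have hw2 : ∀ x : V, (Pi ^ 2) x = Pi (Pi x) := by
    intro x; rw [pow_two]; rfl
  -- shift lemma : S k Π^m = Π^m S (k+m)
  have hshift : ∀ (m k : ℕ), 1 ≤ k → k + m ≤ n - 1 → S k * Pi ^ m = Pi ^ m * S (k + m) := by
    intro m
    induction m with
    | zero => intro k _ _; simp
    | succ m ih =>
      intro k hk h
      calc S k * Pi ^ (m+1) = (S k * Pi ^ m) * Pi := by rw [pow_succ, mul_assoc]
        _ = (Pi ^ m * S (k + m)) * Pi := by rw [ih k hk (by omega)]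
        _ = Pi ^ m * (S (k + m) * Pi) := by rw [mul_assoc]
        _ = Pi ^ m * (Pi * S (k + m + 1)) := by rw [hPiS (k+m) (by omega) (by omega)]
        _ = Pi ^ (m+1) * S (k + (m+1)) := by
            rw [pow_succ, mul_assoc, show k + (m+1) = k + m + 1 from rfl]
  -- Π * (S_{a+1} ⋯ S_{a+len}) = (S_a ⋯ S_{a+len-1}) * Π
  have hPiP : ∀ (len a : ℕ), 1 ≤ a → a + 1 + len ≤ n →
      Pi * Pp S (a+1) len = Pp S a len * Pi := by
    intro len
    induction len with
    | zero => intro a _ _; simp [Pp]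
    | succ len ih =>
      intro a ha h
      show Pi * (S (a+1) * Pp S (a+2) len) = (S a * Pp S (a+1) len) * Pi
      calc Pi * (S (a+1) * Pp S (a+2) len) = (Pi * S (a+1)) * Pp S (a+2) len := by
            rw [mul_assoc]
        _ = (S a * Pi) * Pp S (a+2) len := by rw [← hPiS a ha (by omega)]
        _ = S a * (Pi * Pp S (a+2) len) := by rw [mul_assoc]
        _ = S a * (Pp S (a+1) len * Pi) := by rw [ih (a+1) (by omega) (by omega)]
        _ = (S a * Pp S (a+1) len) * Pi := by rw [mul_assoc]
  -- commutation of S j with a block of letters ≥ j+2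
  have hScomm : ∀ (len j a : ℕ), 1 ≤ j → j + 2 ≤ a → a + len ≤ n →
      S j * Pp S a len = Pp S a len * S j := by
    intro len
    induction len with
    | zero => intro j a _ _ _; simp [Pp]
    | succ len ih =>
      intro j a hj hja h
      have habs : 2 ≤ |(j : ℤ) - (a : ℤ)| := by
        rw [abs_sub_comm, abs_of_nonneg (by omega : (0:ℤ) ≤ (a:ℤ) - (j:ℤ))]; omega
      have hc : S j * S a = S a * S j :=
        hcomm j a hj (by omega) (by omega) (by omega) habs
      show S j * (S a * Pp S (a+1) len) = (S a * Pp S (a+1) len) * S j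
      calc S j * (S a * Pp S (a+1) len) = (S j * S a) * Pp S (a+1) len := by rw [mul_assoc]
        _ = (S a * S j) * Pp S (a+1) len := by rw [hc]
        _ = S a * (S j * Pp S (a+1) len) := by rw [mul_assoc]
        _ = S a * (Pp S (a+1) len * S j) := by rw [ih j (a+1) hj (by omega) (by omega)]
        _ = (S a * Pp S (a+1) len) * S j := by rw [mul_assoc]
  -- shuffle: (S_{i+1} ⋯ S_{i+d}) (S_i ⋯ S_{i+d-1}) = qq S i d
  have hSh : ∀ (d i : ℕ), 1 ≤ i → i + d ≤ n - 1 →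
      Pp S (i+1) d * Pp S i d = qq S i d := by
    intro d
    induction d with
    | zero => intro i _ _; simp [Pp, qq]
    | succ d ih =>
      intro i hi h
      show (S (i+1) * Pp S (i+2) d) * (S i * Pp S (i+1) d) = S (i+1) * S i * qq S (i+1) d
      have hc : S i * Pp S (i+2) d = Pp S (i+2) d * S i :=
        hScomm d i (i+2) hi (by omega) (by omega)
      calc (S (i+1) * Pp S (i+2) d) * (S i * Pp S (i+1) d)
          = S (i+1) * ((Pp S (i+2) d * S i) * Pp S (i+1) d) := by
            rw [mul_assoc, mul_assoc]
        _ = S (i+1) * ((S i * Pp S (i+2) d) * Pp S (i+1) d) := by rw [hc]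
        _ = S (i+1) * (S i * (Pp S (i+2) d * Pp S (i+1) d)) := by rw [mul_assoc]
        _ = S (i+1) * (S i * qq S (i+1) d) := by rw [ih (i+1) (by omega) (by omega)]
        _ = S (i+1) * S i * qq S (i+1) d := by rw [mul_assoc]
  -- propagation: S i * qq S i d = qq S i d * S (i+d)
  have hPr : ∀ (d i : ℕ), 1 ≤ i → i + d ≤ n - 1 →
      S i * qq S i d = qq S i d * S (i + d) := by
    intro d
    induction d with
    | zero => intro i _ _; simp [qq]
    | succ d ih =>
      intro i hi h
      have hb : S i * S (i+1) * S i = S (i+1) * S i * S (i+1) := hbraid i hi (by omega)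
      have e : i + 1 + d = i + (d + 1) := by omega
      show S i * (S (i+1) * S i * qq S (i+1) d) = (S (i+1) * S i * qq S (i+1) d) * S (i + (d+1))
      calc S i * (S (i+1) * S i * qq S (i+1) d)
          = (S i * S (i+1) * S i) * qq S (i+1) d := by
            rw [← mul_assoc (S i) (S (i+1) * S i) (qq S (i+1) d),
              ← mul_assoc (S i) (S (i+1)) (S i)]
        _ = (S (i+1) * S i * S (i+1)) * qq S (i+1) d := by rw [hb]
        _ = S (i+1) * S i * (S (i+1) * qq S (i+1) d) := by rw [mul_assoc]
        _ = S (i+1) * S i * (qq S (i+1) d * S (i+1+d)) := by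
            rw [ih (i+1) (by omega) (by omega)]
        _ = (S (i+1) * S i * qq S (i+1) d) * S (i + (d+1)) := by rw [← mul_assoc, e]
  -- S (n-1) kills w = Π² v
  have hw1 : S (n-1) w = 0 := by
    have e1 : S 1 * Pi ^ (n-2) = Pi ^ (n-2) * S (n-1) := by
      have h := hshift (n-2) 1 le_rfl (by omega)
      rwa [show 1 + (n-2) = n - 1 by omega] at h
    have h3 : (Pi ^ (n-2)) (S (n-1) w) = S 1 v := by
      calc (Pi ^ (n-2)) (S (n-1) w)
          = ((Pi ^ (n-2) * S (n-1)) * Pi ^ 2) v := by rw [happ, happ, hw2]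
        _ = ((S 1 * Pi ^ (n-2)) * Pi ^ 2) v := by rw [← e1]
        _ = (S 1 * Pi ^ n) v := by rw [mul_assoc, ← pow_add, show n-2+2 = n by omega]
        _ = S 1 v := by rw [hPin, mul_one]
    have h4 : (Pi ^ (n-2)) (S (n-1) w) = 0 := by rw [h3, hSv 1 le_rfl (by omega)]
    have h5 : (Pi ^ 2) * Pi ^ (n-2) = 1 := by
      rw [← pow_add, show 2+(n-2) = n by omega, hPin]
    calc S (n-1) w = ((Pi ^ 2) * Pi ^ (n-2)) (S (n-1) w) := by rw [h5]; rfl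
      _ = (Pi ^ 2) ((Pi ^ (n-2)) (S (n-1) w)) := happ _ _ _
      _ = 0 := by rw [h4, map_zero]
  -- w is killed by all S k with k ≠ n-2
  have hwk : ∀ k, 1 ≤ k → k ≤ n - 1 → k ≠ n - 2 → S k w = 0 := by
    intro k h1 h2 h3
    rcases eq_or_ne k (n-1) with hk | hk
    · rw [hk]; exact hw1
    · have hk2 : k + 2 ≤ n - 1 := by omega
      have e := hshift 2 k h1 hk2
      calc S k w = (S k * Pi ^ 2) v := by rw [happ, hw2]
        _ = (Pi ^ 2 * S (k+2)) v := by rw [e]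
        _ = (Pi ^ 2) (S (k+2) v) := happ _ _ _
        _ = 0 := by rw [hSv (k+2) (by omega) hk2, map_zero]
  -- the key vanishing F_i = 0, by downward induction
  have hF : ∀ (d i : ℕ), 1 ≤ i → i + (d + 1) = n →
      Pp S i (d+1) (w + ∑ j ∈ Finset.Ioc i (n-1), Pp S (j-1) (n-j) w) = 0 := by
    intro d
    induction d with
    | zero =>
      intro i hi h
      have he : Finset.Ioc i (n-1) = ∅ := Finset.Ioc_eq_empty (by omega)
      rw [he, Finset.sum_empty, add_zero]
      have hp : Pp S i 1 = S i := by simp [Pp]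
      rw [hp, show i = n - 1 by omega]
      exact hw1
    | succ d ih =>
      intro i hi h
      have hsplit : Finset.Ioc i (n-1) = insert (i+1) (Finset.Ioc (i+1) (n-1)) := by
        ext x; simp only [Finset.mem_Ioc, Finset.mem_insert]; omega
      have hnm : (i+1) ∉ Finset.Ioc (i+1) (n-1) := by simp
      rw [hsplit, Finset.sum_insert hnm]
      have e1 : i + 1 - 1 = i := by omega
      have e2 : n - (i+1) = d + 1 := by omega
      rw [e1, e2]
      have hre : w + (Pp S i (d+1) w + ∑ j ∈ Finset.Ioc (i+1) (n-1), Pp S (j-1) (n-j) w)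
          = (w + ∑ j ∈ Finset.Ioc (i+1) (n-1), Pp S (j-1) (n-j) w) + Pp S i (d+1) w := by
        abel
      rw [hre, map_add]
      have hP : Pp S i (d+1+1) = S i * Pp S (i+1) (d+1) := rfl
      have t1 : Pp S i (d+1+1) (w + ∑ j ∈ Finset.Ioc (i+1) (n-1), Pp S (j-1) (n-j) w) = 0 := by
        rw [hP, happ, ih (i+1) (by omega) (by omega), map_zero]
      have t2 : Pp S i (d+1+1) (Pp S i (d+1) w) = 0 := by
        have c1 : Pp S i (d+1+1) (Pp S i (d+1) w)
            = (S i * (Pp S (i+1) (d+1) * Pp S i (d+1))) w := rfl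
        rw [c1, hSh (d+1) i hi (by omega), hPr (d+1) i hi (by omega), happ,
          show i + (d+1) = n - 1 by omega, hw1, map_zero]
      rw [t1, t2, add_zero]
  -- main identity: T_i v = Σ_{j=1}^{i} T_i T_j v
  have hMain : ∀ i, 1 ≤ i → i ≤ n - 1 →
      TT n S Pi i v = ∑ j ∈ Finset.Ioc 0 i, TT n S Pi i (TT n S Pi j v) := by
    intro i h1 h2
    have hIccIoc : Finset.Icc 1 (n-1) = Finset.Ioc 0 (n-1) := by
      ext x; simp only [Finset.mem_Icc, Finset.mem_Ioc]; omega
    have expand : TT n S Pi i v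
        = TT n S Pi i (Pi v) + ∑ j ∈ Finset.Ioc 0 (n-1), TT n S Pi i (TT n S Pi j v) := by
      conv_lhs => rw [hv]
      rw [map_add, map_sum, hIccIoc]
    have hTTapp : ∀ (k : ℕ) (x : V), TT n S Pi k x = Pp S k (n-k) (Pi x) := by
      intro k x; rw [hTT k]; rfl
    have hzero : TT n S Pi i (Pi v)
        + ∑ j ∈ Finset.Ioc i (n-1), TT n S Pi i (TT n S Pi j v) = 0 := by
      have hterm : ∀ j ∈ Finset.Ioc i (n-1),
          TT n S Pi i (TT n S Pi j v) = Pp S i (n-i) (Pp S (j-1) (n-j) w) := by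
        intro j hj
        simp only [Finset.mem_Ioc] at hj
        have hj2 : 2 ≤ j := by omega
        have hPiPj : Pi * Pp S j (n-j) = Pp S (j-1) (n-j) * Pi := by
          have := hPiP (n-j) (j-1) (by omega) (by omega)
          rwa [show j - 1 + 1 = j by omega] at this
        calc TT n S Pi i (TT n S Pi j v)
            = Pp S i (n-i) (Pi ((Pp S j (n-j) * Pi) v)) := by rw [hTTapp, hTT j]
          _ = Pp S i (n-i) ((Pi * Pp S j (n-j)) (Pi v)) := by rw [happ, happ]
          _ = Pp S i (n-i) ((Pp S (j-1) (n-j) * Pi) (Pi v)) := by rw [hPiPj]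
          _ = Pp S i (n-i) (Pp S (j-1) (n-j) w) := by rw [happ]
      rw [Finset.sum_congr rfl hterm, hTTapp i (Pi v)]
      rw [← map_sum (Pp S i (n-i)), ← map_add (Pp S i (n-i))]
      have hni : n - i = (n - 1 - i) + 1 := by omega
      have := hF (n-1-i) i h1 (by omega)
      rw [hni]
      exact this
    have hsum := Finset.sum_Ioc_consecutive (fun j => TT n S Pi i (TT n S Pi j v))
      (Nat.zero_le i) h2
    calc TT n S Pi i v
        = TT n S Pi i (Pi v) + ((∑ j ∈ Finset.Ioc 0 i, TT n S Pi i (TT n S Pi j v))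
            + ∑ j ∈ Finset.Ioc i (n-1), TT n S Pi i (TT n S Pi j v)) := by
          rw [hsum]; exact expand
      _ = (∑ j ∈ Finset.Ioc 0 i, TT n S Pi i (TT n S Pi j v))
            + (TT n S Pi i (Pi v) + ∑ j ∈ Finset.Ioc i (n-1), TT n S Pi i (TT n S Pi j v)) := by
          abel
      _ = ∑ j ∈ Finset.Ioc 0 i, TT n S Pi i (TT n S Pi j v) := by rw [hzero, add_zero]
  -- vanishing of all T_i v by strong induction + nilpotence
  have hT0 : ∀ i, 1 ≤ i → i ≤ n - 1 → TT n S Pi i v = 0 := by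
    intro i
    induction i using Nat.strong_induction_on with
    | _ i IH =>
      intro h1 h2
      have hm := hMain i h1 h2
      have hsingle : ∑ j ∈ Finset.Ioc 0 i, TT n S Pi i (TT n S Pi j v)
          = TT n S Pi i (TT n S Pi i v) := by
        apply Finset.sum_eq_single_of_mem i (by simp only [Finset.mem_Ioc]; omega)
        intro j hj hne
        simp only [Finset.mem_Ioc] at hj
        rw [IH j (by omega) (by omega) (by omega), map_zero]
      rw [hsingle] at hm
      have hpow : ∀ N : ℕ, TT n S Pi i v = (TT n S Pi i ^ (N+1)) v := by
        intro N
        induction N with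
        | zero => rw [pow_one]
        | succ N ihN =>
          calc TT n S Pi i v = TT n S Pi i (TT n S Pi i v) := hm
            _ = TT n S Pi i ((TT n S Pi i ^ (N+1)) v) := by rw [← ihN]
            _ = (TT n S Pi i ^ (N+1+1)) v := by
                conv_rhs => rw [pow_succ']
                rw [happ]
      obtain ⟨N, hN1, hNz⟩ := hnil i h1 h2
      obtain ⟨M, rfl⟩ : ∃ M, N = M + 1 := ⟨N - 1, by omega⟩
      rw [hpow M]
      exact hNz
  refine ⟨hT0, ?_⟩
  have hzsum : ∑ i ∈ Finset.Icc 1 (n-1), TT n S Pi i v = 0 :=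
    Finset.sum_eq_zero fun j hj =>
      hT0 j (Finset.mem_Icc.mp hj).1 (Finset.mem_Icc.mp hj).2
  rw [hzsum, add_zero] at hv
  exact hv.symm
end

section
/- (Combinatorial form of Proposition 4.1 for GL_n: parameterisation of algebra homomorphisms out of the mod-p spherical Hecke algebra, identified via the Satake isomorphism with the monoid algebra on antidominant coweights.) Let k be a field and n ≥ 1. Let C = {λ ∈ ℤⁿ : λ_1 ≤ ⋯ ≤ λ_n}, an additive monoid, and let χ : C → k satisfy χ(0) = 1 and χ(λ + μ) = χ(λ)·χ(μ) for all λ, μ ∈ C. Then there exist a unique subset J ⊆ {1,…,n−1} and a unique group homomorphism c : L_J → kˣ, where L_J := {λ ∈ ℤⁿ : λ_i = λ_{i+1} for all i ∈ J}, such that χ(λ) = c(λ) for all λ ∈ C ∩ L_J, and χ(λ) = 0 for all λ ∈ C with λ ∉ L_J. -/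
/-- `L_J = {λ ∈ ℤⁿ : λ_j = λ_{j+1} for all j ∈ J}` (0-indexed adjacent pairs). -/
def LJ (n : ℕ) (J : Finset ℕ) : Set (Fin n → ℤ) :=
  {lam | ∀ j j' : Fin n, (j : ℕ) ∈ J → (j' : ℕ) = (j : ℕ) + 1 → lam j = lam j'}

/-! A monotone `λ : Fin (m + 1) → ℤ` is `λ 0 • 1 + ∑ j, (λ (j+1) - λ j) • e_j` with nonnegative
coefficients, where `e_j = (0, …, 0, 1, …, 1)` jumps right after position `j`. Hence
`χ λ = χ(1)^(λ 0) * ∏ j, χ(e_j)^(λ (j+1) - λ j)`, where `χ(1)` is a unit because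
`χ(1) χ(-1) = χ 0 = 1`. This forces `J = {j | χ(e_j) = 0}` (as `e_j ∈ L_J ↔ j ∉ J`) and gives `c`
as the homomorphism with `c 1 = χ 1` and `c e_j = χ e_j` for `j ∉ J`. Uniqueness of `c` on `L_J`:
adding a large monotone `ν ∈ L_J` makes any `λ ∈ L_J` monotone, and `c(λ + ν) = c λ * c ν`. -/

open Finset

theorem monotone_finset_sum {α ι β : Type*} [Preorder ι] [AddCommMonoid β] [PartialOrder β]
    [IsOrderedAddMonoid β] {s : Finset α} {f : α → ι → β} (hf : ∀ a ∈ s, Monotone (f a)) :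
    Monotone (∑ a ∈ s, f a) := fun x y hxy => by
  simpa only [Finset.sum_apply] using Finset.sum_le_sum fun a ha => hf a ha hxy

theorem monotone_sum_nsmul {α ι : Type*} [Preorder ι] {s : Finset α} {g : α → ι → ℤ}
    (hg : ∀ a ∈ s, Monotone (g a)) (t : α → ℕ) : Monotone (∑ a ∈ s, t a • g a) :=
  monotone_finset_sum fun a ha => (hg a ha).const_smul (t a).zero_le

theorem Set.EqOn.of_map_mul_of_exists_add_mem {A G : Type*} [Add A] [Mul G] [IsRightCancelMul G]
    {S T : Set A} {f g : A → G} (hfg : Set.EqOn f g T) (hTS : T ⊆ S)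
    (hf : ∀ a b, a ∈ S → b ∈ S → f (a + b) = f a * f b)
    (hg : ∀ a b, a ∈ S → b ∈ S → g (a + b) = g a * g b)
    (hST : ∀ a ∈ S, ∃ b ∈ T, a + b ∈ T) : Set.EqOn f g S := by
  intro a ha
  obtain ⟨b, hb, hab⟩ := hST a ha
  have h := hfg hab
  rw [hf a b ha (hTS hb), hg a b ha (hTS hb), hfg hb] at h
  exact mul_right_cancel h

open Classical in
noncomputable def unitOrOne {G₀ : Type*} [GroupWithZero G₀] (x : G₀) : G₀ˣ :=
  if h : x = 0 then 1 else Units.mk0 x h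

theorem val_unitOrOne {G₀ : Type*} [GroupWithZero G₀] {x : G₀} (hx : x ≠ 0) :
    (unitOrOne x : G₀) = x := by
  simp [unitOrOne, hx]

structure IsMonotoneChar {ι M : Type*} [Preorder ι] [CommMonoid M] (χ : (ι → ℤ) → M) : Prop where
  map_zero' : χ 0 = 1
  map_add' : ∀ lam mu : ι → ℤ, Monotone lam → Monotone mu → χ (lam + mu) = χ lam * χ mu

namespace IsMonotoneChar

variable {ι M : Type*} [Preorder ι] [CommMonoid M] {χ : (ι → ℤ) → M}

theorem map_nsmul (hχ : IsMonotoneChar χ) {v : ι → ℤ} (hv : Monotone v) (t : ℕ) :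
    χ (t • v) = χ v ^ t := by
  induction t with
  | zero => simpa using hχ.map_zero'
  | succ t ih => rw [succ_nsmul, hχ.map_add' (t • v) v (hv.const_smul t.zero_le) hv, ih, pow_succ]

theorem map_sum_nsmul (hχ : IsMonotoneChar χ) {α : Type*} {s : Finset α} {g : α → ι → ℤ}
    (hg : ∀ a ∈ s, Monotone (g a)) (t : α → ℕ) :
    χ (∑ a ∈ s, t a • g a) = ∏ a ∈ s, χ (g a) ^ t a := by
  classical
  induction s using Finset.induction_on with
  | empty => simpa using hχ.map_zero'
  | insert a s ha ih =>
    rw [forall_mem_insert] at hg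
    rw [sum_insert ha, prod_insert ha,
      hχ.map_add' (t a • g a) (∑ b ∈ s, t b • g b) (hg.1.const_smul (t a).zero_le)
        (monotone_sum_nsmul hg.2 t),
      hχ.map_nsmul hg.1, ih hg.2]

def unitOne (hχ : IsMonotoneChar χ) : Mˣ :=
  Units.mkOfMulEqOne (χ 1) (χ (-1)) <| by
    rw [← hχ.map_add' 1 (-1) monotone_const monotone_const, add_neg_cancel, hχ.map_zero']

theorem map_zsmul_one_add (hχ : IsMonotoneChar χ) {lam : ι → ℤ} (hlam : Monotone lam) (a : ℤ) :
    χ (a • 1 + lam) = ↑(hχ.unitOne ^ a) * χ lam := by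
  have hstep : ∀ b : ℤ, χ ((b + 1) • 1 + lam) = hχ.unitOne * χ (b • 1 + lam) := fun b => by
    rw [add_smul, one_smul, add_comm (b • 1), add_assoc,
      hχ.map_add' 1 (b • 1 + lam) monotone_const (Monotone.add (fun _ _ _ => le_rfl) hlam)]
    rfl
  induction a using Int.induction_on with
  | zero => simp
  | succ i ih => rw [hstep, ih, zpow_add_one, mul_comm (hχ.unitOne ^ (i : ℤ)), Units.val_mul,
      mul_assoc]
  | pred i ih =>
    have h := hstep (-i - 1)
    rw [sub_add_cancel, ih] at h
    rw [zpow_sub_one, Units.val_mul, mul_right_comm, h, mul_comm, Units.inv_mul_cancel_left]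

end IsMonotoneChar

section Steps

variable {m : ℕ}

def stepVec (n j : ℕ) : Fin n → ℤ := fun i => if j < (i : ℕ) then 1 else 0

theorem monotone_stepVec (n j : ℕ) : Monotone (stepVec n j) := fun a b hab => by
  have : (a : ℕ) ≤ b := hab
  simp only [stepVec]
  split_ifs <;> omega

def adjDiff (j : Fin m) : (Fin (m + 1) → ℤ) →+ ℤ :=
  Pi.evalAddMonoidHom (fun _ => ℤ) j.succ - Pi.evalAddMonoidHom (fun _ => ℤ) j.castSucc

@[simp]
theorem adjDiff_apply (j : Fin m) (lam : Fin (m + 1) → ℤ) :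
    adjDiff j lam = lam j.succ - lam j.castSucc := rfl

theorem monotone_iff_adjDiff_nonneg {lam : Fin (m + 1) → ℤ} :
    Monotone lam ↔ ∀ j : Fin m, 0 ≤ adjDiff j lam := by
  simp [Fin.monotone_iff_le_succ]

theorem mem_LJ_iff_adjDiff {J : Finset ℕ} {lam : Fin (m + 1) → ℤ} :
    lam ∈ LJ (m + 1) J ↔ ∀ j : Fin m, (j : ℕ) ∈ J → adjDiff j lam = 0 := by
  refine ⟨fun h j hj => sub_eq_zero.2 (h _ _ hj rfl).symm, fun h j j' hj hj' => ?_⟩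
  obtain ⟨i, rfl⟩ : ∃ i : Fin m, i.castSucc = j := ⟨⟨j, by omega⟩, rfl⟩
  obtain rfl : j' = i.succ := Fin.ext hj'
  exact (sub_eq_zero.1 (h i hj)).symm

theorem adjDiff_stepVec (i j : Fin m) : adjDiff i (stepVec (m + 1) j) = if i = j then 1 else 0 := by
  simp only [adjDiff_apply, stepVec, Fin.val_succ, Fin.val_castSucc, Fin.ext_iff]
  split_ifs <;> omega

theorem stepVec_mem_LJ_iff {J : Finset ℕ} (j : Fin m) :
    stepVec (m + 1) j ∈ LJ (m + 1) J ↔ (j : ℕ) ∉ J := by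
  simp only [mem_LJ_iff_adjDiff, adjDiff_stepVec, ite_eq_right_iff, one_ne_zero, imp_false]
  exact ⟨fun h hj => h j hj rfl, fun h i hi hij => h (hij ▸ hi)⟩

theorem eq_of_adjDiff_eq {lam mu : Fin (m + 1) → ℤ} (h0 : lam 0 = mu 0)
    (h : ∀ j, adjDiff j lam = adjDiff j mu) : lam = mu := by
  funext i
  induction i using Fin.induction with
  | zero => exact h0
  | succ i ih => linarith [h i, adjDiff_apply i lam, adjDiff_apply i mu]

theorem smul_one_add_sum_smul_stepVec (lam : Fin (m + 1) → ℤ) :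
    lam 0 • 1 + ∑ j : Fin m, adjDiff j lam • stepVec (m + 1) j = lam := by
  refine eq_of_adjDiff_eq (by simp [stepVec]) fun i => ?_
  simp only [map_add, map_sum, map_zsmul, adjDiff_stepVec]
  simp

end Steps

theorem exists_monotone_add_mem {m : ℕ} {J : Finset ℕ} {lam : Fin (m + 1) → ℤ}
    (hlam : lam ∈ LJ (m + 1) J) :
    ∃ nu ∈ {mu | Monotone mu} ∩ LJ (m + 1) J, lam + nu ∈ {mu | Monotone mu} ∩ LJ (m + 1) J := by
  classical
  set M := ∑ j : Fin m, |adjDiff j lam|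
  have hM0 : 0 ≤ M := sum_nonneg fun j _ => abs_nonneg _
  have hM : ∀ i, -adjDiff i lam ≤ M := fun i =>
    (neg_le_abs _).trans (single_le_sum (fun j _ => abs_nonneg (adjDiff j lam)) (mem_univ i))
  set nu := ∑ j ∈ univ.filter (fun j : Fin m => (j : ℕ) ∉ J), M • stepVec (m + 1) j
  have hnu : ∀ i, adjDiff i nu = if (i : ℕ) ∈ J then 0 else M := fun i => by
    simp only [nu, map_sum, map_zsmul, adjDiff_stepVec]
    simp
  have hlam' := mem_LJ_iff_adjDiff.1 hlam
  refine ⟨nu, ⟨monotone_iff_adjDiff_nonneg.2 fun i => ?_, mem_LJ_iff_adjDiff.2 fun i hi => ?_⟩,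
    monotone_iff_adjDiff_nonneg.2 fun i => ?_, mem_LJ_iff_adjDiff.2 fun i hi => ?_⟩ <;>
    simp only [map_add, hnu] <;> split_ifs <;> grind

section VanishingSteps

variable {k : Type*} [MonoidWithZero k] {m : ℕ} {χ : (Fin (m + 1) → ℤ) → k}

open Classical in
noncomputable def vanishingSteps (χ : (Fin (m + 1) → ℤ) → k) : Finset ℕ :=
  (range m).filter fun j => χ (stepVec (m + 1) j) = 0

theorem coe_mem_vanishingSteps {j : Fin m} :
    (j : ℕ) ∈ vanishingSteps χ ↔ χ (stepVec (m + 1) j) = 0 := by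
  classical
  simp [vanishingSteps]

theorem vanishingSteps_subset : vanishingSteps χ ⊆ range m := by
  classical
  exact filter_subset _ _

theorem eq_vanishingSteps [Nontrivial k] {J : Finset ℕ} (hJ : J ⊆ range m) {c : (Fin (m + 1) → ℤ) → kˣ}
    (hχc : ∀ lam, Monotone lam → lam ∈ LJ (m + 1) J → χ lam = c lam)
    (hχ0 : ∀ lam, Monotone lam → lam ∉ LJ (m + 1) J → χ lam = 0) :
    J = vanishingSteps χ := by
  ext j
  by_cases hjm : j < m
  · obtain ⟨j, rfl⟩ : ∃ i : Fin m, (i : ℕ) = j := ⟨⟨j, hjm⟩, rfl⟩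
    rw [coe_mem_vanishingSteps, ← not_iff_not, ← stepVec_mem_LJ_iff (J := J)]
    have hmono := monotone_stepVec (m + 1) j
    exact ⟨fun h h0 => (c _).ne_zero ((hχc _ hmono h).symm.trans h0),
      not_imp_comm.1 (hχ0 _ hmono)⟩
  · exact iff_of_false (fun h => hjm (mem_range.1 (hJ h)))
      (fun h => hjm (mem_range.1 (vanishingSteps_subset h)))

end VanishingSteps

namespace IsMonotoneChar

variable {k : Type*} [CommGroupWithZero k] {m : ℕ} {χ : (Fin (m + 1) → ℤ) → k}

theorem eq_mul_prod (hχ : IsMonotoneChar χ) {lam : Fin (m + 1) → ℤ} (hlam : Monotone lam) :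
    χ lam = ↑(hχ.unitOne ^ lam 0) * ∏ j : Fin m, χ (stepVec (m + 1) j) ^ (adjDiff j lam).toNat := by
  have hd := monotone_iff_adjDiff_nonneg.1 hlam
  have hdec : lam = lam 0 • 1 + ∑ j : Fin m, (adjDiff j lam).toNat • stepVec (m + 1) j := by
    simp_rw [← natCast_zsmul, Int.toNat_of_nonneg (hd _), smul_one_add_sum_smul_stepVec]
  have hsteps : ∀ j ∈ (univ : Finset (Fin m)), Monotone (stepVec (m + 1) j) :=
    fun j _ => monotone_stepVec _ _
  conv_lhs => rw [hdec]
  rw [hχ.map_zsmul_one_add (monotone_sum_nsmul hsteps _), hχ.map_sum_nsmul hsteps]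

-- On `L_J` the exponents `adjDiff j` with `χ (e_j) = 0` vanish, so the `1` put there is harmless.
noncomputable def unitChar (hχ : IsMonotoneChar χ) (lam : Fin (m + 1) → ℤ) : kˣ :=
  hχ.unitOne ^ lam 0 * ∏ j : Fin m, unitOrOne (χ (stepVec (m + 1) j)) ^ adjDiff j lam

theorem unitChar_add (hχ : IsMonotoneChar χ) (lam mu : Fin (m + 1) → ℤ) :
    hχ.unitChar (lam + mu) = hχ.unitChar lam * hχ.unitChar mu := by
  simp only [unitChar, Pi.add_apply, map_add, zpow_add, prod_mul_distrib]
  exact mul_mul_mul_comm _ _ _ _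

theorem eq_unitChar (hχ : IsMonotoneChar χ) {lam : Fin (m + 1) → ℤ}
    (hlam : Monotone lam) (hJ : lam ∈ LJ (m + 1) (vanishingSteps χ)) :
    χ lam = hχ.unitChar lam := by
  rw [hχ.eq_mul_prod hlam, unitChar, Units.val_mul, Units.coe_prod]
  congr 1
  refine prod_congr rfl fun j _ => ?_
  by_cases hj : χ (stepVec (m + 1) j) = 0
  · simp [mem_LJ_iff_adjDiff.1 hJ j (coe_mem_vanishingSteps.2 hj)]
  · rw [Units.val_zpow_eq_zpow_val, val_unitOrOne hj,
      ← zpow_natCast, Int.toNat_of_nonneg (monotone_iff_adjDiff_nonneg.1 hlam j)]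

theorem eq_zero_of_notMem (hχ : IsMonotoneChar χ) {lam : Fin (m + 1) → ℤ}
    (hlam : Monotone lam) (hJ : lam ∉ LJ (m + 1) (vanishingSteps χ)) : χ lam = 0 := by
  obtain ⟨j, hjJ, hj⟩ : ∃ j : Fin m, ↑j ∈ vanishingSteps χ ∧ adjDiff j lam ≠ 0 := by
    simpa [mem_LJ_iff_adjDiff] using hJ
  have hpos := monotone_iff_adjDiff_nonneg.1 hlam j
  rw [hχ.eq_mul_prod hlam]
  refine mul_eq_zero_of_right _ (prod_eq_zero (mem_univ j) ?_)
  rw [coe_mem_vanishingSteps.1 hjJ, zero_pow]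
  omega

end IsMonotoneChar

/-- combinatorial form of Proposition 4.1 for `GL_n`: a character
`χ` of the monoid `C` of antidominant coweights with values in a field `k` is given by a
unique pair `(J, c)` of a subset `J` of the simple roots and a group homomorphism
`c : L_J → kˣ` (encoded as a function on `ℤⁿ` multiplicative on `L_J`, unique on `L_J`):
`χ = c` on `C ∩ L_J` and `χ = 0` on `C ∖ L_J`. -/
theorem statement19 (k : Type*) [Field k] (n : ℕ) (hn : 1 ≤ n)
    (χ : (Fin n → ℤ) → k) (h0 : χ 0 = 1)
    (hmul : ∀ lam mu : Fin n → ℤ, Monotone lam → Monotone mu →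
      χ (lam + mu) = χ lam * χ mu) :
    ∃ J : Finset ℕ, J ⊆ Finset.range (n - 1) ∧
      ∃ c : (Fin n → ℤ) → kˣ,
        (∀ lam mu : Fin n → ℤ, lam ∈ LJ n J → mu ∈ LJ n J →
          c (lam + mu) = c lam * c mu) ∧
        (∀ lam : Fin n → ℤ, Monotone lam → lam ∈ LJ n J → χ lam = (c lam : k)) ∧
        (∀ lam : Fin n → ℤ, Monotone lam → lam ∉ LJ n J → χ lam = 0) ∧
        ∀ (J' : Finset ℕ) (c' : (Fin n → ℤ) → kˣ),
          J' ⊆ Finset.range (n - 1) →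
          (∀ lam mu : Fin n → ℤ, lam ∈ LJ n J' → mu ∈ LJ n J' →
            c' (lam + mu) = c' lam * c' mu) →
          (∀ lam : Fin n → ℤ, Monotone lam → lam ∈ LJ n J' → χ lam = (c' lam : k)) →
          (∀ lam : Fin n → ℤ, Monotone lam → lam ∉ LJ n J' → χ lam = 0) →
          J' = J ∧ ∀ lam ∈ LJ n J, c' lam = c lam := by
  obtain ⟨m, rfl⟩ : ∃ m, n = m + 1 := ⟨n - 1, by omega⟩
  have hχ : IsMonotoneChar χ := ⟨h0, hmul⟩
  refine ⟨vanishingSteps χ, vanishingSteps_subset, hχ.unitChar,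
    fun lam mu _ _ => hχ.unitChar_add lam mu, fun _ => hχ.eq_unitChar,
    fun _ => hχ.eq_zero_of_notMem, ?_⟩
  intro J c hJ hc_add hχc hχ0
  obtain rfl := eq_vanishingSteps hJ hχc hχ0
  refine ⟨rfl, fun lam hlam => Set.EqOn.of_map_mul_of_exists_add_mem ?_ Set.inter_subset_right
    hc_add (fun a b _ _ => hχ.unitChar_add a b) (fun _ => exists_monotone_add_mem) hlam⟩
  intro mu ⟨hmono, hmem⟩
  exact Units.ext ((hχc mu hmono hmem).symm.trans (hχ.eq_unitChar hmono hmem))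
end
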